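/- arXiv:1904.11129 — 9 statements merged into one kernel-verified Lean document; each statement's English description precedes it below -/
import Mathlib

section
/- For every γ ∈ Γ there exists a bounded linear operator S γ : H →L[ℂ] H with S γ (z β) = z (γ + β) for all β ∈ Γ; moreover its operator norm equals the supremum over α ∈ Γ of ‖z (γ + α)‖ / ‖z α‖, and in particular ‖S γ‖ ≤ ‖z γ‖. -/
/-!
Normalizing the orthogonal family `z` gives a Hilbert basis `e`. The shift `S γ` must send `e α`
to `(‖z (γ + α)‖ / ‖z α‖) • e (γ + α)`, and by cancellativity `α ↦ e (γ + α)` is again orthonormal.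
So `S γ` is a diagonal operator on `ℓ²(Γ)` followed by the isometry of `ℓ²(Γ)` onto the closed span
of that family, and its norm is the supremum of the diagonal weights, which the committee
inequality bounds by `‖z γ‖`.
-/

open scoped ENNReal lp

namespace lp

variable {𝕜 α : Type*} [NontriviallyNormedField 𝕜] {E : α → Type*} [∀ i, NormedAddCommGroup (E i)]
  [∀ i, NormedSpace 𝕜 (E i)] {p : ℝ≥0∞}

theorem norm_smul_apply_le (w : ℓ^∞(α, 𝕜)) (f : lp E p) (i : α) :
    ‖w i • f i‖ ≤ ‖w‖ * ‖f i‖ :=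
  (norm_smul_le _ _).trans <| by
    gcongr; exact norm_apply_le_norm ENNReal.top_ne_zero w i

theorem memℓp_smul (w : ℓ^∞(α, 𝕜)) (f : lp E p) : Memℓp (fun i => w i • f i) p :=
  ((lp.memℓp f).norm.const_mul ‖w‖).mono (norm_smul_apply_le w f)

variable [Fact (1 ≤ p)]

noncomputable def diagonalCLM (w : ℓ^∞(α, 𝕜)) : lp E p →L[𝕜] lp E p :=
  LinearMap.mkContinuous
    { toFun := fun f => ⟨fun i => w i • f i, memℓp_smul w f⟩
      map_add' := fun f g => lp.ext <| funext fun i => smul_add _ _ _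
      map_smul' := fun c f => lp.ext <| funext fun i => smul_comm _ _ _ }
    ‖w‖ fun f => by
      have hp : p ≠ 0 := (zero_lt_one.trans_le (Fact.out : 1 ≤ p)).ne'
      calc _ ≤ ‖‖w‖ • toNorm f‖ := lp.norm_mono hp fun i => by
              simpa [toNorm, abs_of_nonneg (norm_nonneg w)] using norm_smul_apply_le w f i
        _ = ‖w‖ * ‖f‖ := by rw [norm_const_smul hp, norm_norm, norm_toNorm]

theorem norm_diagonalCLM_le (w : ℓ^∞(α, 𝕜)) : ‖(diagonalCLM w : lp E p →L[𝕜] lp E p)‖ ≤ ‖w‖ :=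
  LinearMap.mkContinuous_norm_le _ (norm_nonneg w) _

theorem diagonalCLM_apply (w : ℓ^∞(α, 𝕜)) (f : lp E p) (i : α) :
    diagonalCLM w f i = w i • f i := rfl

theorem diagonalCLM_single [DecidableEq α] (w : ℓ^∞(α, 𝕜)) (i : α) (x : E i) :
    diagonalCLM w (lp.single p i x) = lp.single p i (w i • x) := by
  ext j
  rw [diagonalCLM_apply]
  rcases eq_or_ne j i with rfl | hj
  · simp only [lp.single_apply_self]
  · simp only [lp.single_apply_ne p i _ hj, smul_zero]

end lp

theorem Submodule.span_range_smul_of_isUnit {R M ι : Type*} [Semiring R] [AddCommMonoid M]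
    [Module R M] {c : ι → R} (hc : ∀ i, IsUnit (c i)) (v : ι → M) :
    span R (Set.range fun i => c i • v i) = span R (Set.range v) :=
  le_antisymm
    (span_le.2 <| Set.range_subset_iff.2 fun i => smul_mem _ _ (subset_span ⟨i, rfl⟩))
    (span_le.2 <| Set.range_subset_iff.2 fun i =>
      (smul_mem_iff_of_isUnit _ (hc i)).1 (subset_span ⟨i, rfl⟩))

section

variable {ι 𝕜 H E : Type*} [RCLike 𝕜] [NormedAddCommGroup H] [InnerProductSpace 𝕜 H]
  [NormedAddCommGroup E] [InnerProductSpace 𝕜 E] [CompleteSpace E]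

theorem orthonormal_inv_norm_smul {z : ι → H} (hz : ∀ i, z i ≠ 0)
    (hz_orth : Pairwise fun i j => inner 𝕜 (z i) (z j) = 0) :
    Orthonormal 𝕜 fun i => (‖z i‖⁻¹ : 𝕜) • z i :=
  ⟨fun i => norm_smul_inv_norm (hz i), fun i j hij => by
    simp only [inner_smul_left, inner_smul_right, hz_orth hij, mul_zero]⟩

theorem HilbertBasis.exists_clm_apply_eq_smul (b : HilbertBasis ι 𝕜 H) {v : ι → E}
    (hv : Orthonormal 𝕜 v) (w : ℓ^∞(ι, 𝕜)) :
    ∃ T : H →L[𝕜] E, (∀ i, T (b i) = w i • v i) ∧ ‖T‖ = ‖w‖ := by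
  classical
  set L := hv.orthogonalFamily.linearIsometry
  let T : H →L[𝕜] E := L.toContinuousLinearMap ∘L
    lp.diagonalCLM w ∘L b.repr.toContinuousLinearEquiv.toContinuousLinearMap
  have hTx : ∀ x, T x = L (lp.diagonalCLM w (b.repr x)) := fun _ => rfl
  have hT : ∀ i, T (b i) = w i • v i := fun i => by
    rw [hTx, b.repr_self, lp.diagonalCLM_single, smul_eq_mul, mul_one,
      OrthogonalFamily.linearIsometry_apply_single, LinearIsometry.toSpanSingleton_apply]
  refine ⟨T, hT, le_antisymm ?_ ?_⟩
  · refine T.opNorm_le_bound (norm_nonneg w) fun x => ?_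
    rw [hTx, L.norm_map, ← b.repr.norm_map x]
    exact ContinuousLinearMap.le_of_opNorm_le _ (lp.norm_diagonalCLM_le w) (b.repr x)
  · refine lp.norm_le_of_forall_le (norm_nonneg T) fun i => ?_
    have := T.le_opNorm (b i)
    rwa [hT, norm_smul, hv.1 i, b.orthonormal.1 i, mul_one, mul_one] at this

theorem exists_clm_apply_eq_of_orthogonal [CompleteSpace H] {z : ι → H}
    (hz : ∀ i, z i ≠ 0) (hz_orth : Pairwise fun i j => inner 𝕜 (z i) (z j) = 0)
    (hz_dense : (Submodule.span 𝕜 (Set.range z)).topologicalClosure = ⊤) {y : ι → E}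
    (hy : ∀ i, y i ≠ 0) (hy_orth : Pairwise fun i j => inner 𝕜 (y i) (y j) = 0)
    (hbdd : BddAbove (Set.range fun i => ‖y i‖ / ‖z i‖)) :
    ∃ T : H →L[𝕜] E, (∀ i, T (z i) = y i) ∧ ‖T‖ = ⨆ i, ‖y i‖ / ‖z i‖ := by
  have hz_unit : ∀ i, IsUnit (‖z i‖⁻¹ : 𝕜) := fun i => by simpa using hz i
  have hspan :
      ⊤ ≤ (Submodule.span 𝕜 (Set.range fun i => (‖z i‖⁻¹ : 𝕜) • z i)).topologicalClosure := by
    rw [Submodule.span_range_smul_of_isUnit hz_unit, hz_dense]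
  let w : ℓ^∞(ι, 𝕜) := ⟨fun i => ((‖y i‖ / ‖z i‖ : ℝ) : 𝕜), memℓp_infty (by simpa using hbdd)⟩
  obtain ⟨T, hT, hT_norm⟩ := (HilbertBasis.mk (orthonormal_inv_norm_smul hz hz_orth) hspan
    ).exists_clm_apply_eq_smul (orthonormal_inv_norm_smul hy hy_orth) w
  refine ⟨T, fun i => ?_, ?_⟩
  · have hTi := hT i
    rw [HilbertBasis.coe_mk, map_smul] at hTi
    have hzi : (‖z i‖ : 𝕜) ≠ 0 := by simpa using hz i
    have hyi : (‖y i‖ : 𝕜) ≠ 0 := by simpa using hy i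
    refine smul_right_injective E (inv_ne_zero hzi) (hTi.trans ?_)
    simp only [w, smul_smul, RCLike.ofReal_div]
    congr 1
    field_simp
  · rw [hT_norm, lp.norm_eq_ciSup]
    simp [w]

end

theorem stmt_0_general
    {H : Type*} [NormedAddCommGroup H] [InnerProductSpace ℂ H] [CompleteSpace H]
    {Γ : Type*} [AddCancelMonoid Γ]
    (z : Γ → H)
    (hz_ne : ∀ α, z α ≠ 0)
    (hz_orth : ∀ α β, α ≠ β → (inner ℂ (z α) (z β) : ℂ) = 0)
    (hz_dense : (Submodule.span ℂ (Set.range z)).topologicalClosure = ⊤)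
    (hcomm : ∀ α β, ‖z (α + β)‖ ≤ ‖z α‖ * ‖z β‖)
    (γ : Γ) :
    ∃ S : H →L[ℂ] H, (∀ β, S (z β) = z (γ + β)) ∧
      ‖S‖ = ⨆ α, ‖z (γ + α)‖ / ‖z α‖ ∧ ‖S‖ ≤ ‖z γ‖ := by
  have hratio_le : ∀ α, ‖z (γ + α)‖ / ‖z α‖ ≤ ‖z γ‖ := fun α =>
    div_le_of_le_mul₀ (norm_nonneg _) (norm_nonneg _) (hcomm γ α)
  obtain ⟨S, hS, hS_norm⟩ := exists_clm_apply_eq_of_orthogonal hz_ne (fun α β => hz_orth α β)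
    hz_dense (fun α => hz_ne (γ + α))
    (fun α β hαβ => hz_orth _ _ ((add_right_injective γ).ne hαβ))
    ⟨‖z γ‖, Set.forall_mem_range.2 hratio_le⟩
  exact ⟨S, hS, hS_norm, hS_norm ▸ Real.iSup_le hratio_le (norm_nonneg _)⟩

/-- In a committee space, for every `γ` there exists a monomial shift
`S γ : H →L[ℂ] H` with `S γ (z β) = z (γ + β)`, its operator norm equals
`⨆ α, ‖z (γ + α)‖ / ‖z α‖`, and in particular `‖S γ‖ ≤ ‖z γ‖`. -/
theorem stmt_0
    {H : Type*} [NormedAddCommGroup H] [InnerProductSpace ℂ H] [CompleteSpace H]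
    {Γ : Type*} [AddCancelMonoid Γ]
    (z : Γ → H)
    (hz_ne : ∀ α, z α ≠ 0)
    (hz_orth : ∀ α β, α ≠ β → (inner ℂ (z α) (z β) : ℂ) = 0)
    (hz_dense : (Submodule.span ℂ (Set.range z)).topologicalClosure = ⊤)
    (hz0 : ‖z 0‖ = 1)
    (hcomm : ∀ α β, ‖z (α + β)‖ ≤ ‖z α‖ * ‖z β‖)
    (γ : Γ) :
    ∃ S : H →L[ℂ] H, (∀ β, S (z β) = z (γ + β)) ∧
      ‖S‖ = ⨆ α, ‖z (γ + α)‖ / ‖z α‖ ∧ ‖S‖ ≤ ‖z γ‖ :=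
  stmt_0_general z hz_ne hz_orth hz_dense hcomm γ
end

section
/- Let γ, α ∈ Γ and let S γ be a monomial shift. If there exists β ∈ Γ with α = γ + β (such β is unique by cancellativity), then ‖(S γ)† (z α)‖ = ‖z α‖² / ‖z β‖. If no such β exists, then (S γ)† (z α) = 0. -/
/-!
Since the span of the orthogonal family `z` is dense, a vector is determined by its inner
products with the `z b`. For `S†(z α)` these are `⟪z (γ + b), z α⟫`, which by orthogonality and
left cancellation vanish unless `α = γ + b`. Hence `S†(z α) = 0` when `α ∉ γ + Γ`, and otherwise
`S†(z (γ + β))` is the multiple of `z β` with the single nonzero coefficient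
`‖z (γ + β)‖² / ‖z β‖²`.
-/

open ContinuousLinearMap Submodule Set

section DenseSpan

variable {𝕜 E ι : Type*} [RCLike 𝕜] [NormedAddCommGroup E] [InnerProductSpace 𝕜 E]
  [CompleteSpace E] {z : ι → E}

theorem eq_zero_of_forall_inner_eq_zero_of_span_dense
    (hz : (span 𝕜 (range z)).topologicalClosure = ⊤) {v : E}
    (hv : ∀ i, inner 𝕜 (z i) v = 0) : v = 0 := by
  have hortho : span 𝕜 (range z) ⟂ span 𝕜 {v} := by
    rw [isOrtho_span]
    rintro _ ⟨i, rfl⟩ _ rfl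
    exact hv i
  have hle : span 𝕜 {v} ≤ (span 𝕜 (range z))ᗮ := hortho.symm
  rw [topologicalClosure_eq_top_iff.mp hz, le_bot_iff, span_singleton_eq_bot] at hle
  exact hle

theorem ext_inner_of_span_dense (hz : (span 𝕜 (range z)).topologicalClosure = ⊤) {u v : E}
    (h : ∀ i, inner 𝕜 (z i) u = inner 𝕜 (z i) v) : u = v :=
  sub_eq_zero.mp <| eq_zero_of_forall_inner_eq_zero_of_span_dense hz fun i => by
    rw [inner_sub_right, h, sub_self]

end DenseSpan

section MonomialShift

variable {𝕜 H Γ : Type*} [RCLike 𝕜] [NormedAddCommGroup H] [InnerProductSpace 𝕜 H]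
  [CompleteSpace H] [AddCancelMonoid Γ] {z : Γ → H} {S : H →L[𝕜] H} {γ : Γ}

theorem inner_adjoint_monomialShift (hS : ∀ β, S (z β) = z (γ + β)) (b : Γ) (v : H) :
    inner 𝕜 (z b) (adjoint S v) = inner 𝕜 (z (γ + b)) v := by
  rw [adjoint_inner_right, hS]

theorem adjoint_monomialShift_apply_add
    (hz_orth : Pairwise fun α β => inner 𝕜 (z α) (z β) = 0)
    (hz_dense : (span 𝕜 (range z)).topologicalClosure = ⊤)
    (hS : ∀ β, S (z β) = z (γ + β)) {β : Γ} (hβ : z β ≠ 0) :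
    adjoint S (z (γ + β)) = ((‖z (γ + β)‖ ^ 2 / ‖z β‖ ^ 2 : ℝ) : 𝕜) • z β := by
  refine ext_inner_of_span_dense hz_dense fun b => ?_
  rw [inner_adjoint_monomialShift hS, inner_smul_right]
  rcases eq_or_ne b β with rfl | hb
  · have hβ' : (‖z b‖ : 𝕜) ^ 2 ≠ 0 := by simpa using hβ
    rw [inner_self_eq_norm_sq_to_K, inner_self_eq_norm_sq_to_K]
    push_cast
    rw [div_mul_cancel₀ _ hβ']
  · rw [hz_orth fun h => hb (add_left_cancel h), hz_orth hb, mul_zero]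

theorem norm_adjoint_monomialShift_apply_add
    (hz_orth : Pairwise fun α β => inner 𝕜 (z α) (z β) = 0)
    (hz_dense : (span 𝕜 (range z)).topologicalClosure = ⊤)
    (hS : ∀ β, S (z β) = z (γ + β)) {β : Γ} (hβ : z β ≠ 0) :
    ‖adjoint S (z (γ + β))‖ = ‖z (γ + β)‖ ^ 2 / ‖z β‖ := by
  have hβ' : ‖z β‖ ≠ 0 := norm_ne_zero_iff.mpr hβ
  rw [adjoint_monomialShift_apply_add hz_orth hz_dense hS hβ, norm_smul, RCLike.norm_ofReal,
    abs_of_nonneg (by positivity)]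
  field_simp

theorem adjoint_monomialShift_apply_eq_zero
    (hz_orth : Pairwise fun α β => inner 𝕜 (z α) (z β) = 0)
    (hz_dense : (span 𝕜 (range z)).topologicalClosure = ⊤)
    (hS : ∀ β, S (z β) = z (γ + β)) {α : Γ} (hα : ∀ β, γ + β ≠ α) :
    adjoint S (z α) = 0 :=
  eq_zero_of_forall_inner_eq_zero_of_span_dense hz_dense fun b => by
    rw [inner_adjoint_monomialShift hS, hz_orth (hα b)]

end MonomialShift

theorem stmt_1_general
    {H : Type*} [NormedAddCommGroup H] [InnerProductSpace ℂ H] [CompleteSpace H]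
    {Γ : Type*} [AddCancelMonoid Γ]
    (z : Γ → H)
    (hz_ne : ∀ α, z α ≠ 0)
    (hz_orth : ∀ α β, α ≠ β → (inner ℂ (z α) (z β) : ℂ) = 0)
    (hz_dense : (Submodule.span ℂ (Set.range z)).topologicalClosure = ⊤)
    (γ α : Γ) (S : H →L[ℂ] H) (hS : ∀ β, S (z β) = z (γ + β)) :
    (∀ β, α = γ + β →
        ‖(ContinuousLinearMap.adjoint S) (z α)‖ = ‖z α‖ ^ 2 / ‖z β‖) ∧
      (¬ (∃ β, α = γ + β) → (ContinuousLinearMap.adjoint S) (z α) = 0) := by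
  refine ⟨?_, fun hα => ?_⟩
  · rintro β rfl
    exact norm_adjoint_monomialShift_apply_add hz_orth hz_dense hS (hz_ne β)
  · exact adjoint_monomialShift_apply_eq_zero hz_orth hz_dense hS
      fun β hβ => hα ⟨β, hβ.symm⟩

/-- For a monomial shift `S` for `γ`, if `α = γ + β` for some (necessarily
unique) `β`, then `‖S† (z α)‖ = ‖z α‖² / ‖z β‖`; if no such `β` exists, then `S† (z α) = 0`. -/
theorem stmt_1
    {H : Type*} [NormedAddCommGroup H] [InnerProductSpace ℂ H] [CompleteSpace H]
    {Γ : Type*} [AddCancelMonoid Γ]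
    (z : Γ → H)
    (hz_ne : ∀ α, z α ≠ 0)
    (hz_orth : ∀ α β, α ≠ β → (inner ℂ (z α) (z β) : ℂ) = 0)
    (hz_dense : (Submodule.span ℂ (Set.range z)).topologicalClosure = ⊤)
    (hz0 : ‖z 0‖ = 1)
    (hcomm : ∀ α β, ‖z (α + β)‖ ≤ ‖z α‖ * ‖z β‖)
    (γ α : Γ) (S : H →L[ℂ] H) (hS : ∀ β, S (z β) = z (γ + β)) :
    (∀ β, α = γ + β →
        ‖(ContinuousLinearMap.adjoint S) (z α)‖ = ‖z α‖ ^ 2 / ‖z β‖) ∧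
      (¬ (∃ β, α = γ + β) → (ContinuousLinearMap.adjoint S) (z α) = 0) :=
  stmt_1_general z hz_ne hz_orth hz_dense γ α S hS
end

section
/- The operator norm of the row operator R satisfies ‖R‖ ≤ ⨆_{α ∈ Γ} ∑'_{γ ∈ {γ : ∃ β, α = γ + β}} w γ * ‖z γ‖². -/
open scoped NNReal ENNReal

/-!
Normalise `z` to the Hilbert basis `b α = z α / ‖z α‖` and put `t δ = |⟪b δ, h⟫|²`. Then
`S γ (b α) = (‖z (γ + α)‖ / ‖z α‖) • b (γ + α)`, and the committee inequality bounds the ratio by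
`‖z γ‖`, so Parseval gives `‖(S γ)† h‖² ≤ ‖z γ‖² ∑_α t (γ + α)`. Weighting by `w γ` and regrouping
the pairs `(γ, α)` according to `δ = γ + α` (by left cancellation `γ` determines `α`) bounds
`⟪R h, h⟫` by `∑_δ c δ t δ ≤ (⨆ c) ‖h‖²`, where `c δ` sums `w γ ‖z γ‖²` over the left divisors `γ`
of `δ`. Since `R` is positive, this quadratic-form bound is a bound on `‖R‖`. The sums are
manipulated in `ℝ≥0∞`, where no summability side conditions arise.
-/

theorem ENNReal.tsum_mul_tsum_add_le {Γ : Type*} [Add Γ] [IsLeftCancelAdd Γ] (a t : Γ → ℝ≥0∞) :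
    ∑' γ, a γ * ∑' α, t (γ + α) ≤
      (⨆ δ, ∑' γ : {γ : Γ // ∃ β, δ = γ + β}, a γ) * ∑' δ, t δ := by
  let e : Γ × Γ ≃ Σ δ : Γ, {γ : Γ // ∃ β, δ = γ + β} :=
    .ofBijective (fun p => ⟨p.1 + p.2, p.1, p.2, rfl⟩)
      ⟨fun p q hpq => by
        have h₁ : p.1 = q.1 := congrArg (fun s => (s.2 : Γ)) hpq
        have h₂ : p.1 + p.2 = q.1 + q.2 := congrArg Sigma.fst hpq
        exact Prod.ext h₁ (add_left_cancel (h₁ ▸ h₂)),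
       fun ⟨_, γ, β, hδ⟩ => ⟨(γ, β), by subst hδ; rfl⟩⟩
  calc ∑' γ, a γ * ∑' α, t (γ + α)
      = ∑' p : Γ × Γ, a p.1 * t (p.1 + p.2) := by
        simp only [← ENNReal.tsum_mul_left]; exact ENNReal.tsum_prod.symm
    _ = ∑' s : Σ δ : Γ, {γ : Γ // ∃ β, δ = γ + β}, a s.2 * t s.1 :=
        e.tsum_eq (fun s => a s.2 * t s.1)
    _ = ∑' δ, (∑' γ : {γ : Γ // ∃ β, δ = γ + β}, a γ) * t δ := by
        simp only [ENNReal.tsum_sigma', ENNReal.tsum_mul_right]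
    _ ≤ ∑' δ, (⨆ δ, ∑' γ : {γ : Γ // ∃ β, δ = γ + β}, a γ) * t δ :=
        ENNReal.tsum_le_tsum fun δ => by gcongr; exact le_iSup_of_le δ le_rfl
    _ = _ := ENNReal.tsum_mul_left

theorem HilbertBasis.enorm_sq_eq_tsum {ι 𝕜 E : Type*} [RCLike 𝕜] [NormedAddCommGroup E]
    [InnerProductSpace 𝕜 E] (b : HilbertBasis ι 𝕜 E) (x : E) :
    ‖x‖ₑ ^ 2 = ∑' i, ‖(inner 𝕜 (b i) x : 𝕜)‖ₑ ^ 2 := by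
  have := lp.hasSum_norm (p := 2) (by norm_num) (b.repr x)
  simp only [ENNReal.toReal_ofNat, Real.rpow_two, b.repr_apply_apply,
    LinearIsometryEquiv.norm_map] at this
  have h2 : HasSum (fun i => ‖(inner 𝕜 (b i) x : 𝕜)‖₊ ^ 2) (‖x‖₊ ^ 2) := by
    rw [← NNReal.hasSum_coe]; push_cast; exact this
  simpa [enorm_eq_nnnorm] using (ENNReal.hasSum_coe.2 h2).tsum_eq.symm

theorem exists_hilbertBasis_smul_eq {ι 𝕜 E : Type*} [RCLike 𝕜] [NormedAddCommGroup E]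
    [InnerProductSpace 𝕜 E] [CompleteSpace E] {v : ι → E} (hv : ∀ i, v i ≠ 0)
    (horth : ∀ i j, i ≠ j → (inner 𝕜 (v i) (v j) : 𝕜) = 0)
    (hdense : (Submodule.span 𝕜 (Set.range v)).topologicalClosure = ⊤) :
    ∃ b : HilbertBasis ι 𝕜 E, ∀ i, v i = (‖v i‖ : 𝕜) • b i := by
  have hnorm : ∀ i, (‖v i‖ : 𝕜) ≠ 0 := fun i => by simpa using hv i
  let u : ι → E := fun i => (‖v i‖ : 𝕜)⁻¹ • v i
  have hvu : ∀ i, v i = (‖v i‖ : 𝕜) • u i := fun i => (smul_inv_smul₀ (hnorm i) _).symm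
  have hu : Orthonormal 𝕜 u :=
    ⟨fun i => norm_smul_inv_norm (hv i), fun i j hij => by
      simp only [u, inner_smul_left, inner_smul_right, horth i j hij, mul_zero]⟩
  refine ⟨HilbertBasis.mk hu ?_, fun i => by rw [HilbertBasis.coe_mk]; exact hvu i⟩
  rw [← hdense]
  refine Submodule.topologicalClosure_mono (Submodule.span_le.2 ?_)
  rintro _ ⟨i, rfl⟩
  rw [hvu i]
  exact Submodule.smul_mem _ _ (Submodule.subset_span ⟨i, rfl⟩)

theorem ENNReal.toReal_tsum_coe_mul_enorm_sq {ι E : Type*} [SeminormedAddGroup E] (w : ι → ℝ≥0)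
    (x : ι → E) : (∑' i, (w i : ℝ≥0∞) * ‖x i‖ₑ ^ 2).toReal = ∑' i, (w i : ℝ) * ‖x i‖ ^ 2 := by
  rw [ENNReal.tsum_toReal_eq fun i => by finiteness]
  simp [ENNReal.toReal_mul, toReal_enorm]

theorem ENNReal.tsum_coe_mul_enorm_sq_ne_top {ι E : Type*} [SeminormedAddGroup E] {w : ι → ℝ≥0}
    {x : ι → E} (hw : Summable fun i => (w i : ℝ) * ‖x i‖ ^ 2) :
    ∑' i, (w i : ℝ≥0∞) * ‖x i‖ₑ ^ 2 ≠ ∞ := by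
  have := (ENNReal.tsum_coe_ne_top_iff_summable_coe (f := fun i => w i * ‖x i‖₊ ^ 2)).2
    (by simpa using hw)
  simpa [enorm_eq_nnnorm] using this

theorem ContinuousLinearMap.norm_le_of_re_inner_le {H : Type*} [NormedAddCommGroup H]
    [InnerProductSpace ℂ H] [CompleteSpace H] {T : H →L[ℂ] H} (hT : T.IsPositive) {C : ℝ}
    (hC : 0 ≤ C) (hle : ∀ x, RCLike.re (inner ℂ (T x) x) ≤ C * ‖x‖ ^ 2) : ‖T‖ ≤ C := by
  rw [CStarAlgebra.norm_le_iff_le_algebraMap T hC ((nonneg_iff_isPositive T).2 hT), le_def,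
    isPositive_def']
  refine ⟨(IsSelfAdjoint.algebraMap _ (.all C)).sub hT.isSelfAdjoint, fun x => ?_⟩
  have hCx : (inner ℂ ((C : ℂ) • x) x).re = C * ‖x‖ ^ 2 := by
    rw [inner_smul_left, Complex.conj_ofReal, inner_self_eq_norm_sq_to_K, Complex.re_ofReal_mul]
    norm_cast
  simpa [reApplyInnerSelf, Algebra.algebraMap_eq_smul_one, inner_sub_left, ← Complex.coe_smul,
    hCx] using hle x

section MonomialShift

variable {H Γ : Type*} [NormedAddCommGroup H] [InnerProductSpace ℂ H] [CompleteSpace H] [Add Γ]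
  {z : Γ → H} {b : HilbertBasis Γ ℂ H} {S : H →L[ℂ] H} {γ : Γ}

theorem norm_inner_adjoint_le (hz : ∀ α, z α ≠ 0) (hb : ∀ α, z α = (‖z α‖ : ℂ) • b α)
    (hcomm : ∀ α β, ‖z (α + β)‖ ≤ ‖z α‖ * ‖z β‖) (hS : ∀ β, S (z β) = z (γ + β)) (α : Γ) (h : H) :
    ‖(inner ℂ (b α) (ContinuousLinearMap.adjoint S h) : ℂ)‖ ≤
      ‖z γ‖ * ‖(inner ℂ (b (γ + α)) h : ℂ)‖ := by
  have hzα : 0 < ‖z α‖ := norm_pos_iff.2 (hz α)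
  have hSb : S (b α) = ((‖z (γ + α)‖ / ‖z α‖ : ℝ) : ℂ) • b (γ + α) := by
    rw [(eq_inv_smul_iff₀ (Complex.ofReal_ne_zero.2 hzα.ne')).2 (hb α).symm, map_smul, hS]
    conv_lhs => rw [hb (γ + α)]
    rw [smul_smul, div_eq_inv_mul, Complex.ofReal_mul, Complex.ofReal_inv]
  rw [ContinuousLinearMap.adjoint_inner_right, hSb, inner_smul_left, norm_mul, RCLike.norm_conj,
    Complex.norm_real, Real.norm_of_nonneg (by positivity)]
  gcongr
  rw [div_le_iff₀ hzα]
  exact hcomm γ α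

theorem enorm_adjoint_sq_le (hz : ∀ α, z α ≠ 0) (hb : ∀ α, z α = (‖z α‖ : ℂ) • b α)
    (hcomm : ∀ α β, ‖z (α + β)‖ ≤ ‖z α‖ * ‖z β‖) (hS : ∀ β, S (z β) = z (γ + β)) (h : H) :
    ‖ContinuousLinearMap.adjoint S h‖ₑ ^ 2 ≤
      ‖z γ‖ₑ ^ 2 * ∑' α, ‖(inner ℂ (b (γ + α)) h : ℂ)‖ₑ ^ 2 := by
  rw [b.enorm_sq_eq_tsum, ← ENNReal.tsum_mul_left]
  refine ENNReal.tsum_le_tsum fun α => ?_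
  rw [← mul_pow]
  gcongr
  simpa only [enorm_eq_nnnorm, ← ENNReal.coe_mul, ENNReal.coe_le_coe, ← NNReal.coe_le_coe,
    NNReal.coe_mul, coe_nnnorm] using norm_inner_adjoint_le hz hb hcomm hS α h

theorem tsum_mul_enorm_adjoint_sq_le [IsLeftCancelAdd Γ] (hz_ne : ∀ α, z α ≠ 0)
    (hz_orth : ∀ α β, α ≠ β → (inner ℂ (z α) (z β) : ℂ) = 0)
    (hz_dense : (Submodule.span ℂ (Set.range z)).topologicalClosure = ⊤)
    (hcomm : ∀ α β, ‖z (α + β)‖ ≤ ‖z α‖ * ‖z β‖) (w : Γ → ℝ≥0∞) {S : Γ → H →L[ℂ] H}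
    (hS : ∀ γ β, S γ (z β) = z (γ + β)) (h : H) :
    ∑' γ, w γ * ‖ContinuousLinearMap.adjoint (S γ) h‖ₑ ^ 2 ≤
      (⨆ δ, ∑' γ : {γ : Γ // ∃ β, δ = γ + β}, w γ * ‖z γ‖ₑ ^ 2) * ‖h‖ₑ ^ 2 := by
  obtain ⟨b, hb⟩ := exists_hilbertBasis_smul_eq hz_ne hz_orth hz_dense
  calc ∑' γ, w γ * ‖ContinuousLinearMap.adjoint (S γ) h‖ₑ ^ 2
      ≤ ∑' γ, w γ * ‖z γ‖ₑ ^ 2 * ∑' α, ‖(inner ℂ (b (γ + α)) h : ℂ)‖ₑ ^ 2 :=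
        ENNReal.tsum_le_tsum fun γ => by
          rw [mul_assoc]; gcongr; exact enorm_adjoint_sq_le hz_ne hb hcomm (hS γ) h
    _ ≤ _ := ENNReal.tsum_mul_tsum_add_le (fun γ => w γ * ‖z γ‖ₑ ^ 2)
          (fun δ => ‖(inner ℂ (b δ) h : ℂ)‖ₑ ^ 2)
    _ = _ := by rw [← b.enorm_sq_eq_tsum]

end MonomialShift

theorem stmt_3_general
    {H : Type*} [NormedAddCommGroup H] [InnerProductSpace ℂ H] [CompleteSpace H]
    {Γ : Type*} [AddCancelMonoid Γ]
    (z : Γ → H)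
    (hz_ne : ∀ α, z α ≠ 0)
    (hz_orth : ∀ α β, α ≠ β → (inner ℂ (z α) (z β) : ℂ) = 0)
    (hz_dense : (Submodule.span ℂ (Set.range z)).topologicalClosure = ⊤)
    (hcomm : ∀ α β, ‖z (α + β)‖ ≤ ‖z α‖ * ‖z β‖)
    (w : Γ → ℝ≥0)
    (hw : Summable fun γ => (w γ : ℝ) * ‖z γ‖ ^ 2)
    (S : Γ → H →L[ℂ] H) (hS : ∀ γ β, S γ (z β) = z (γ + β))
    (R : H →L[ℂ] H)
    (hR : ∀ h : H, (inner ℂ (R h) h : ℂ)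
        = ((∑' γ, (w γ : ℝ) * ‖(ContinuousLinearMap.adjoint (S γ)) h‖ ^ 2 : ℝ) : ℂ)) :
    ‖R‖ ≤ ⨆ α : Γ, ∑' γ : {γ : Γ // ∃ β, α = γ + β}, (w γ.1 : ℝ) * ‖z γ.1‖ ^ 2 := by
  set C := ⨆ δ, ∑' γ : {γ : Γ // ∃ β, δ = γ + β}, (w γ : ℝ≥0∞) * ‖z γ‖ₑ ^ 2
  have hC : C ≠ ∞ := ne_top_of_le_ne_top (ENNReal.tsum_coe_mul_enorm_sq_ne_top hw)
    (iSup_le fun δ => ENNReal.tsum_comp_le_tsum_of_injective Subtype.val_injective _)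
  have hC_toReal : C.toReal =
      ⨆ α : Γ, ∑' γ : {γ : Γ // ∃ β, α = γ + β}, (w γ.1 : ℝ) * ‖z γ.1‖ ^ 2 := by
    rw [ENNReal.toReal_iSup fun δ => ne_top_of_le_ne_top hC (le_iSup _ δ)]
    simp only [ENNReal.toReal_tsum_coe_mul_enorm_sq]
  have hR_re : ∀ h, RCLike.re (inner ℂ (R h) h) =
      (∑' γ, (w γ : ℝ≥0∞) * ‖ContinuousLinearMap.adjoint (S γ) h‖ₑ ^ 2).toReal := fun h => by
    rw [hR, ENNReal.toReal_tsum_coe_mul_enorm_sq, RCLike.re_to_complex, Complex.ofReal_re]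
  have hR_pos : R.IsPositive := by
    refine (ContinuousLinearMap.isPositive_iff_complex R).2 fun h => ⟨?_, ?_⟩
    · rw [hR, RCLike.re_to_complex, Complex.ofReal_re]
    · rw [hR_re]; exact ENNReal.toReal_nonneg
  rw [← hC_toReal]
  refine R.norm_le_of_re_inner_le hR_pos ENNReal.toReal_nonneg fun h => ?_
  rw [hR_re, ← toReal_enorm, ← ENNReal.toReal_pow, ← ENNReal.toReal_mul]
  exact ENNReal.toReal_mono (by finiteness)
    (tsum_mul_enorm_adjoint_sq_le hz_ne hz_orth hz_dense hcomm _ hS h)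

/-- The row operator `R` (with quadratic form
`⟪R h, h⟫ = ∑' γ, w γ * ‖(S γ)† h‖²`) satisfies
`‖R‖ ≤ ⨆ α, ∑'_{γ : ∃ β, α = γ + β} w γ * ‖z γ‖²`. -/
theorem stmt_3
    {H : Type*} [NormedAddCommGroup H] [InnerProductSpace ℂ H] [CompleteSpace H]
    {Γ : Type*} [AddCancelMonoid Γ]
    (z : Γ → H)
    (hz_ne : ∀ α, z α ≠ 0)
    (hz_orth : ∀ α β, α ≠ β → (inner ℂ (z α) (z β) : ℂ) = 0)
    (hz_dense : (Submodule.span ℂ (Set.range z)).topologicalClosure = ⊤)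
    (hz0 : ‖z 0‖ = 1)
    (hcomm : ∀ α β, ‖z (α + β)‖ ≤ ‖z α‖ * ‖z β‖)
    (w : Γ → ℝ≥0)
    (hw : Summable fun γ => (w γ : ℝ) * ‖z γ‖ ^ 2)
    (S : Γ → H →L[ℂ] H) (hS : ∀ γ β, S γ (z β) = z (γ + β))
    (R : H →L[ℂ] H)
    (hR : ∀ h : H, (inner ℂ (R h) h : ℂ)
        = ((∑' γ, (w γ : ℝ) * ‖(ContinuousLinearMap.adjoint (S γ)) h‖ ^ 2 : ℝ) : ℂ)) :
    ‖R‖ ≤ ⨆ α : Γ, ∑' γ : {γ : Γ // ∃ β, α = γ + β}, (w γ.1 : ℝ) * ‖z γ.1‖ ^ 2 :=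
  stmt_3_general z hz_ne hz_orth hz_dense hcomm w hw S hS R hR
end

section
/- The operator norm of the column operator C satisfies ‖C‖ = ∑'_γ w γ * ‖z γ‖². -/
/-! The committee inequality bounds each monomial shift by `‖S γ‖ ≤ ‖z γ‖`: on finite
combinations of the orthogonal vectors `z β` this is Pythagoras, and density does the rest. Hence
the quadratic form of `C` lies between `0` and `M ‖h‖²`, where `M = ∑' γ, w γ * ‖z γ‖²`. Being
real, it makes `C` self-adjoint, so `‖C‖` is the supremum of the Rayleigh quotient, and this
supremum is attained at the unit vector `z 0` because `S γ (z 0) = z γ`. -/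

open scoped NNReal InnerProductSpace

section

variable {𝕜 : Type*} [RCLike 𝕜] {E : Type*} [NormedAddCommGroup E] [InnerProductSpace 𝕜 E]

theorem norm_sq_sum_smul_of_pairwise_inner_eq_zero {ι : Type*} {v : ι → E}
    (hv : Pairwise fun a b => ⟪v a, v b⟫_𝕜 = 0) (c : ι → 𝕜) (s : Finset ι) :
    ‖∑ i ∈ s, c i • v i‖ ^ 2 = ∑ i ∈ s, ‖c i‖ ^ 2 * ‖v i‖ ^ 2 := by
  classical
  induction s using Finset.induction_on with
  | empty => simp
  | insert a s ha ih =>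
    have horth : ⟪c a • v a, ∑ i ∈ s, c i • v i⟫_𝕜 = 0 := by
      rw [inner_sum]
      refine Finset.sum_eq_zero fun i hi => ?_
      rw [inner_smul_left, inner_smul_right, hv (ne_of_mem_of_not_mem hi ha).symm, mul_zero,
        mul_zero]
    rw [Finset.sum_insert ha, Finset.sum_insert ha, ← ih, sq,
      norm_add_sq_eq_norm_sq_add_norm_sq_of_inner_eq_zero _ _ horth, ← sq, ← sq, norm_smul, mul_pow]

theorem ContinuousLinearMap.opNorm_le_of_pairwise_inner_eq_zero {ι : Type*} {v u : ι → E}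
    (hv : Pairwise fun a b => ⟪v a, v b⟫_𝕜 = 0) (hu : Pairwise fun a b => ⟪u a, u b⟫_𝕜 = 0)
    (hdense : (Submodule.span 𝕜 (Set.range v)).topologicalClosure = ⊤)
    (T : E →L[𝕜] E) (hT : ∀ i, T (v i) = u i) {c : ℝ} (hc : 0 ≤ c) (huv : ∀ i, ‖u i‖ ≤ c * ‖v i‖) :
    ‖T‖ ≤ c := by
  refine T.opNorm_le_bound hc fun x => ?_
  refine (Submodule.dense_iff_topologicalClosure_eq_top.mpr hdense).induction (fun x hx => ?_)
    (isClosed_le T.continuous.norm (continuous_const.mul continuous_norm)) x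
  obtain ⟨a, rfl⟩ := Finsupp.mem_span_range_iff_exists_finsupp.mp hx
  have hTa : T (a.sum fun i ai => ai • v i) = a.sum fun i ai => ai • u i := by
    simp only [Finsupp.sum, map_sum, map_smul, hT]
  refine pow_le_pow_iff_left₀ (norm_nonneg _) (by positivity) two_ne_zero |>.mp ?_
  rw [hTa, Finsupp.sum, Finsupp.sum, norm_sq_sum_smul_of_pairwise_inner_eq_zero hu,
    mul_pow, norm_sq_sum_smul_of_pairwise_inner_eq_zero hv, Finset.mul_sum]
  refine Finset.sum_le_sum fun i _ => ?_
  calc ‖a i‖ ^ 2 * ‖u i‖ ^ 2 ≤ ‖a i‖ ^ 2 * (c * ‖v i‖) ^ 2 := by gcongr; exact huv i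
    _ = c ^ 2 * (‖a i‖ ^ 2 * ‖v i‖ ^ 2) := by ring

theorem ContinuousLinearMap.opNorm_eq_of_abs_re_inner_self_le {T : E →L[𝕜] E}
    (hT : (T : E →ₗ[𝕜] E).IsSymmetric) {M : ℝ} (hle : ∀ x, |RCLike.re ⟪T x, x⟫_𝕜| ≤ M * ‖x‖ ^ 2)
    {x₀ : E} (hx₀ : ‖x₀‖ = 1) (hM : RCLike.re ⟪T x₀, x₀⟫_𝕜 = M) :
    ‖T‖ = M := by
  have hM0 : 0 ≤ M := by
    have := hle x₀
    rw [hM, hx₀, one_pow, mul_one] at this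
    exact (abs_nonneg M).trans this
  rw [T.norm_eq_iSup_rayleighQuotient hT]
  refine le_antisymm (ciSup_le fun x => ?_) ?_
  · rcases eq_or_ne x 0 with rfl | hx
    · simpa using hM0
    rw [rayleighQuotient, reApplyInnerSelf_apply, abs_div, abs_sq, div_le_iff₀ (by positivity)]
    exact hle x
  · refine le_ciSup_of_le T.bddAbove_rayleighQuotient x₀ ?_
    simp [rayleighQuotient, reApplyInnerSelf_apply, hx₀, hM, abs_of_nonneg hM0]

theorem tsum_mul_norm_sq_apply_le {ι : Type*} {w : ι → ℝ≥0} {a : ι → ℝ}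
    (hw : Summable fun i => (w i : ℝ) * a i ^ 2) {T : ι → E →L[𝕜] E} (hT : ∀ i, ‖T i‖ ≤ a i)
    (x : E) : ∑' i, (w i : ℝ) * ‖T i x‖ ^ 2 ≤ (∑' i, (w i : ℝ) * a i ^ 2) * ‖x‖ ^ 2 := by
  have hle : ∀ i, (w i : ℝ) * ‖T i x‖ ^ 2 ≤ (w i : ℝ) * a i ^ 2 * ‖x‖ ^ 2 := fun i => by
    rw [mul_assoc, ← mul_pow]
    gcongr
    exact (T i).le_of_opNorm_le (hT i) x
  rw [← tsum_mul_right]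
  exact Summable.tsum_le_tsum hle
    (.of_nonneg_of_le (fun i => by positivity) hle (hw.mul_right _)) (hw.mul_right _)

end

theorem stmt_5_general
    {H : Type*} [NormedAddCommGroup H] [InnerProductSpace ℂ H]
    {Γ : Type*} [AddCancelMonoid Γ]
    (z : Γ → H)
    (hz_orth : ∀ α β, α ≠ β → (inner ℂ (z α) (z β) : ℂ) = 0)
    (hz_dense : (Submodule.span ℂ (Set.range z)).topologicalClosure = ⊤)
    (hz0 : ‖z 0‖ = 1)
    (hcomm : ∀ α β, ‖z (α + β)‖ ≤ ‖z α‖ * ‖z β‖)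
    (w : Γ → ℝ≥0)
    (hw : Summable fun γ => (w γ : ℝ) * ‖z γ‖ ^ 2)
    (S : Γ → H →L[ℂ] H) (hS : ∀ γ β, S γ (z β) = z (γ + β))
    (C : H →L[ℂ] H)
    (hC : ∀ h : H, (inner ℂ (C h) h : ℂ)
        = ((∑' γ, (w γ : ℝ) * ‖S γ h‖ ^ 2 : ℝ) : ℂ)) :
    ‖C‖ = ∑' γ, (w γ : ℝ) * ‖z γ‖ ^ 2 := by
  have hshift : ∀ γ, ‖S γ‖ ≤ ‖z γ‖ := fun γ =>
    (S γ).opNorm_le_of_pairwise_inner_eq_zero hz_orth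
      (fun _ _ hne => hz_orth _ _ (hne ∘ add_left_cancel)) hz_dense (hS γ) (norm_nonneg _)
      (hcomm γ)
  have hre : ∀ h, RCLike.re (inner ℂ (C h) h) = ∑' γ, (w γ : ℝ) * ‖S γ h‖ ^ 2 := fun h => by
    simp [hC]
  have hsymm : (C : H →ₗ[ℂ] H).IsSymmetric :=
    (LinearMap.isSymmetric_iff_inner_map_self_real _).mpr fun h => by
      rw [ContinuousLinearMap.coe_coe, hC, Complex.conj_ofReal]
  refine C.opNorm_eq_of_abs_re_inner_self_le hsymm (fun h => ?_) hz0 ?_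
  · rw [hre, abs_of_nonneg (tsum_nonneg fun γ => by positivity)]
    exact tsum_mul_norm_sq_apply_le hw hshift h
  · simp only [hre, hS, add_zero]

/-- The column operator `C` (with quadratic form
`⟪C h, h⟫ = ∑' γ, w γ * ‖S γ h‖²`) satisfies `‖C‖ = ∑' γ, w γ * ‖z γ‖²`. -/
theorem stmt_5
    {H : Type*} [NormedAddCommGroup H] [InnerProductSpace ℂ H] [CompleteSpace H]
    {Γ : Type*} [AddCancelMonoid Γ]
    (z : Γ → H)
    (hz_ne : ∀ α, z α ≠ 0)
    (hz_orth : ∀ α β, α ≠ β → (inner ℂ (z α) (z β) : ℂ) = 0)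
    (hz_dense : (Submodule.span ℂ (Set.range z)).topologicalClosure = ⊤)
    (hz0 : ‖z 0‖ = 1)
    (hcomm : ∀ α β, ‖z (α + β)‖ ≤ ‖z α‖ * ‖z β‖)
    (w : Γ → ℝ≥0)
    (hw : Summable fun γ => (w γ : ℝ) * ‖z γ‖ ^ 2)
    (S : Γ → H →L[ℂ] H) (hS : ∀ γ β, S γ (z β) = z (γ + β))
    (C : H →L[ℂ] H)
    (hC : ∀ h : H, (inner ℂ (C h) h : ℂ)
        = ((∑' γ, (w γ : ℝ) * ‖S γ h‖ ^ 2 : ℝ) : ℂ)) :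
    ‖C‖ = ∑' γ, (w γ : ℝ) * ‖z γ‖ ^ 2 :=
  stmt_5_general z hz_orth hz_dense hz0 hcomm w hw S hS C hC
end

section
/- (Main theorem: random multipliers satisfy the true column-row property.) The row and column operators satisfy ‖R‖ ≤ ‖C‖. -/
/-!
On finite combinations of the orthogonal vectors `z β`, Pythagoras and the committee inequality
give `‖S γ x‖ ≤ ‖z γ‖ ‖x‖`, and density extends this to `‖S γ‖ ≤ ‖z γ‖`; the adjoints obey the
same bound. Hence the positive operator `R` has quadratic form at most `M ‖h‖²` with
`M = ∑ w γ ‖z γ‖²`, so `‖R‖ ≤ M`. Testing `C` on the unit vector `z 0` gives exactly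
`⟪C (z 0), z 0⟫ = ∑ w γ ‖z (γ + 0)‖² = M`, so `M ≤ ‖C‖`.
-/

open scoped NNReal InnerProductSpace

section Pythagoras

variable {𝕜 E ι : Type*} [RCLike 𝕜] [NormedAddCommGroup E] [InnerProductSpace 𝕜 E]

theorem norm_sum_smul_sq_of_pairwise_inner_eq_zero {v : ι → E}
    (hv : Pairwise fun i j => ⟪v i, v j⟫_𝕜 = 0) (s : Finset ι) (c : ι → 𝕜) :
    ‖∑ i ∈ s, c i • v i‖ ^ 2 = ∑ i ∈ s, ‖c i‖ ^ 2 * ‖v i‖ ^ 2 := by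
  have hdiag : ∀ j ∈ s, ∑ i ∈ s, ⟪c i • v i, c j • v j⟫_𝕜 = ⟪c j • v j, c j • v j⟫_𝕜 :=
    fun j hj => Finset.sum_eq_single_of_mem j hj fun i _ hij => by
      rw [inner_smul_left, inner_smul_right, hv hij, mul_zero, mul_zero]
  have : ((‖∑ i ∈ s, c i • v i‖ : ℝ) : 𝕜) ^ 2 = ∑ i ∈ s, ((‖c i • v i‖ : ℝ) : 𝕜) ^ 2 := by
    simp only [← inner_self_eq_norm_sq_to_K, sum_inner, inner_sum]
    exact Finset.sum_congr rfl hdiag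
  simp only [← norm_smul, ← mul_pow]
  exact mod_cast this

end Pythagoras

namespace ContinuousLinearMap

variable {𝕜 E F ι : Type*} [RCLike 𝕜] [NormedAddCommGroup E] [InnerProductSpace 𝕜 E]
  [NormedAddCommGroup F] [InnerProductSpace 𝕜 F]

theorem opNorm_le_of_dense_span {T : E →L[𝕜] F} {v : ι → E}
    (hv : (Submodule.span 𝕜 (Set.range v)).topologicalClosure = ⊤) {c : ℝ} (hc : 0 ≤ c)
    (h : ∀ x ∈ Submodule.span 𝕜 (Set.range v), ‖T x‖ ≤ c * ‖x‖) : ‖T‖ ≤ c :=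
  T.opNorm_le_bound hc fun x =>
    (Submodule.dense_iff_topologicalClosure_eq_top.mpr hv).induction h
      (isClosed_le T.continuous.norm (continuous_const.mul continuous_norm)) x

theorem IsPositive.opNorm_le {T : E →L[𝕜] E} (hT : T.IsPositive) {M : ℝ} (hM : 0 ≤ M)
    (h : ∀ x, RCLike.re ⟪T x, x⟫_𝕜 ≤ M * ‖x‖ ^ 2) : ‖T‖ ≤ M := by
  rw [T.norm_eq_iSup_rayleighQuotient hT.isSymmetric]
  refine ciSup_le fun x => ?_
  rw [rayleighQuotient, reApplyInnerSelf_apply,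
    abs_of_nonneg (div_nonneg (hT.re_inner_nonneg_left x) (sq_nonneg _))]
  rcases eq_or_ne x 0 with rfl | hx
  · simpa using hM
  · exact (div_le_iff₀ (by positivity)).mpr (h x)

theorem re_inner_apply_self_le (T : E →L[𝕜] E) (x : E) :
    RCLike.re ⟪T x, x⟫_𝕜 ≤ ‖T‖ * ‖x‖ ^ 2 :=
  calc RCLike.re ⟪T x, x⟫_𝕜 ≤ ‖T x‖ * ‖x‖ := re_inner_le_norm _ _
    _ ≤ ‖T‖ * ‖x‖ * ‖x‖ := by gcongr; exact T.le_opNorm x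
    _ = ‖T‖ * ‖x‖ ^ 2 := by ring

end ContinuousLinearMap

theorem tsum_mul_norm_apply_sq_le {𝕜 E F ι : Type*} [RCLike 𝕜] [NormedAddCommGroup E]
    [NormedSpace 𝕜 E] [NormedAddCommGroup F] [NormedSpace 𝕜 F] {T : ι → E →L[𝕜] F}
    {w : ι → ℝ≥0} {a : ι → ℝ} (hT : ∀ i, ‖T i‖ ≤ a i) (hw : Summable fun i => (w i : ℝ) * a i ^ 2)
    (x : E) : ∑' i, (w i : ℝ) * ‖T i x‖ ^ 2 ≤ (∑' i, (w i : ℝ) * a i ^ 2) * ‖x‖ ^ 2 := by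
  have hterm : ∀ i, (w i : ℝ) * ‖T i x‖ ^ 2 ≤ (w i : ℝ) * a i ^ 2 * ‖x‖ ^ 2 := fun i => by
    rw [mul_assoc, ← mul_pow]
    gcongr
    exact (T i).le_of_opNorm_le (hT i) x
  have hsum : Summable fun i => (w i : ℝ) * a i ^ 2 * ‖x‖ ^ 2 := hw.mul_right _
  rw [← tsum_mul_right]
  exact (hsum.of_nonneg_of_le (fun i => by positivity) hterm).tsum_le_tsum hterm hsum

theorem norm_monomialShift_le {𝕜 H Γ : Type*} [RCLike 𝕜] [NormedAddCommGroup H]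
    [InnerProductSpace 𝕜 H] [Add Γ] [IsLeftCancelAdd Γ] {z : Γ → H}
    (hz_orth : Pairwise fun α β => ⟪z α, z β⟫_𝕜 = 0)
    (hz_dense : (Submodule.span 𝕜 (Set.range z)).topologicalClosure = ⊤)
    (hcomm : ∀ α β, ‖z (α + β)‖ ≤ ‖z α‖ * ‖z β‖) {γ : Γ} {S : H →L[𝕜] H}
    (hS : ∀ β, S (z β) = z (γ + β)) : ‖S‖ ≤ ‖z γ‖ := by
  refine ContinuousLinearMap.opNorm_le_of_dense_span hz_dense (norm_nonneg _) fun x hx => ?_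
  obtain ⟨c, rfl⟩ := Finsupp.mem_span_range_iff_exists_finsupp.mp hx
  have hshift_orth : Pairwise fun α β => ⟪z (γ + α), z (γ + β)⟫_𝕜 = 0 :=
    fun α β hαβ => hz_orth fun h => hαβ (add_left_cancel h)
  rw [Finsupp.sum, map_sum]
  simp only [map_smul, hS]
  rw [← pow_le_pow_iff_left₀ (norm_nonneg _) (by positivity) two_ne_zero, mul_pow,
    norm_sum_smul_sq_of_pairwise_inner_eq_zero hshift_orth,
    norm_sum_smul_sq_of_pairwise_inner_eq_zero hz_orth, Finset.mul_sum]
  refine Finset.sum_le_sum fun i _ => ?_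
  calc ‖c i‖ ^ 2 * ‖z (γ + i)‖ ^ 2 ≤ ‖c i‖ ^ 2 * (‖z γ‖ * ‖z i‖) ^ 2 := by
        gcongr; exact hcomm γ i
    _ = ‖z γ‖ ^ 2 * (‖c i‖ ^ 2 * ‖z i‖ ^ 2) := by ring

theorem stmt_6_general
    {H : Type*} [NormedAddCommGroup H] [InnerProductSpace ℂ H] [CompleteSpace H]
    {Γ : Type*} [AddCancelMonoid Γ]
    (z : Γ → H)
    (hz_orth : ∀ α β, α ≠ β → (inner ℂ (z α) (z β) : ℂ) = 0)
    (hz_dense : (Submodule.span ℂ (Set.range z)).topologicalClosure = ⊤)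
    (hz0 : ‖z 0‖ = 1)
    (hcomm : ∀ α β, ‖z (α + β)‖ ≤ ‖z α‖ * ‖z β‖)
    (w : Γ → ℝ≥0)
    (hw : Summable fun γ => (w γ : ℝ) * ‖z γ‖ ^ 2)
    (S : Γ → H →L[ℂ] H) (hS : ∀ γ β, S γ (z β) = z (γ + β))
    (R : H →L[ℂ] H)
    (hR : ∀ h : H, (inner ℂ (R h) h : ℂ)
        = ((∑' γ, (w γ : ℝ) * ‖(ContinuousLinearMap.adjoint (S γ)) h‖ ^ 2 : ℝ) : ℂ))
    (C : H →L[ℂ] H)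
    (hC : ∀ h : H, (inner ℂ (C h) h : ℂ)
        = ((∑' γ, (w γ : ℝ) * ‖S γ h‖ ^ 2 : ℝ) : ℂ)) :
    ‖R‖ ≤ ‖C‖ := by
  set M := ∑' γ, (w γ : ℝ) * ‖z γ‖ ^ 2
  have hS_le γ : ‖S γ‖ ≤ ‖z γ‖ := norm_monomialShift_le hz_orth hz_dense hcomm (hS γ)
  have hS_adjoint_le γ : ‖ContinuousLinearMap.adjoint (S γ)‖ ≤ ‖z γ‖ :=
    (ContinuousLinearMap.adjoint.norm_map (S γ)).trans_le (hS_le γ)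
  have hR_pos : R.IsPositive := (ContinuousLinearMap.isPositive_iff_complex R).mpr fun h => by
    simpa [hR h] using tsum_nonneg fun γ => by positivity
  have hRM : ‖R‖ ≤ M := hR_pos.opNorm_le (tsum_nonneg fun γ => by positivity) fun h => by
    simpa [hR h] using tsum_mul_norm_apply_sq_le hS_adjoint_le hw h
  calc ‖R‖ ≤ M := hRM
    _ = RCLike.re ⟪C (z 0), z 0⟫_ℂ := by simp [hC, hS, M]
    _ ≤ ‖C‖ * ‖z 0‖ ^ 2 := C.re_inner_apply_self_le (z 0)
    _ = ‖C‖ := by rw [hz0, one_pow, mul_one]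

/-- Main theorem: random multipliers satisfy the true column-row property:
`‖R‖ ≤ ‖C‖` for the row and column operators of a random multiplier model. -/
theorem stmt_6
    {H : Type*} [NormedAddCommGroup H] [InnerProductSpace ℂ H] [CompleteSpace H]
    {Γ : Type*} [AddCancelMonoid Γ]
    (z : Γ → H)
    (hz_ne : ∀ α, z α ≠ 0)
    (hz_orth : ∀ α β, α ≠ β → (inner ℂ (z α) (z β) : ℂ) = 0)
    (hz_dense : (Submodule.span ℂ (Set.range z)).topologicalClosure = ⊤)
    (hz0 : ‖z 0‖ = 1)
    (hcomm : ∀ α β, ‖z (α + β)‖ ≤ ‖z α‖ * ‖z β‖)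
    (w : Γ → ℝ≥0)
    (hw : Summable fun γ => (w γ : ℝ) * ‖z γ‖ ^ 2)
    (S : Γ → H →L[ℂ] H) (hS : ∀ γ β, S γ (z β) = z (γ + β))
    (R : H →L[ℂ] H)
    (hR : ∀ h : H, (inner ℂ (R h) h : ℂ)
        = ((∑' γ, (w γ : ℝ) * ‖(ContinuousLinearMap.adjoint (S γ)) h‖ ^ 2 : ℝ) : ℂ))
    (C : H →L[ℂ] H)
    (hC : ∀ h : H, (inner ℂ (C h) h : ℂ)
        = ((∑' γ, (w γ : ℝ) * ‖S γ h‖ ^ 2 : ℝ) : ℂ)) :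
    ‖R‖ ≤ ‖C‖ :=
  stmt_6_general z hz_orth hz_dense hz0 hcomm w hw S hS R hR C hC
end

section
/- (Truncated shifts.) Let Γ = ι →₀ ℕ (finitely supported multi-indices) with degree |α| = ∑_i α i, let n ∈ ℕ, and let Q be the orthogonal projection of H onto the closed span of {z α : |α| ≤ n}. Let w : Γ → ℝ≥0 be finitely supported, and for each γ let S γ be a monomial shift. Then ‖∑_γ w γ • (Q ∘ S γ ∘ Q ∘ (S γ)† ∘ Q)‖ ≤ max over α with |α| ≤ n of ∑_{(γ,β) : γ + β = α} w γ * ‖z γ‖², this maximum is ≤ ∑_{γ : |γ| ≤ n} w γ * ‖z γ‖², and ∑_{γ : |γ| ≤ n} w γ * ‖z γ‖² ≤ ‖∑_γ w γ • (Q ∘ (S γ)† ∘ Q ∘ S γ ∘ Q)‖. In particular the truncated row norm is at most the truncated column norm. -/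
/-!
With respect to the orthogonal family `z`, the adjoint of a monomial shift acts by
`(S γ)† (z (γ + β)) = (‖z (γ + β)‖² / ‖z β‖²) • z β` and kills the monomials that are not of the
form `z (γ + β)`. Hence the truncated row operator is diagonal in the monomials, and by the
committee inequality its entry at `α` is at most `∑_{γ + β = α} w γ ‖z γ‖²`; a diagonal operator
has norm at most the supremum of its entries. Each of these sums runs over distinct `γ` of degree
at most `|α| ≤ n`, which gives the middle inequality. For the column operator `T`, testing on the
unit vector `z 0` gives `⟪z 0, T (z 0)⟫ = ∑ w γ ‖Q (z γ)‖² = ∑_{|γ| ≤ n} w γ ‖z γ‖²`.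
-/

open scoped NNReal InnerProductSpace
open ContinuousLinearMap Submodule

section Hilbert

variable {𝕜 E ι : Type*} [RCLike 𝕜] [NormedAddCommGroup E] [InnerProductSpace 𝕜 E]

theorem ext_inner_right_of_dense_span {v : ι → E}
    (hv : (span 𝕜 (Set.range v)).topologicalClosure = ⊤) {x y : E}
    (h : ∀ i, ⟪x, v i⟫_𝕜 = ⟪y, v i⟫_𝕜) : x = y := by
  have : innerSL 𝕜 x = innerSL 𝕜 y :=
    ContinuousLinearMap.ext_on (Submodule.dense_iff_topologicalClosure_eq_top.mpr hv)
      (by rintro _ ⟨i, rfl⟩; simpa using h i)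
  exact ext_inner_right 𝕜 fun u => by simpa using congr($this u)

theorem HilbertBasis.inner_apply_of_apply_eq_smul (b : HilbertBasis ι 𝕜 E) {T : E →L[𝕜] E}
    {d : ι → 𝕜} (hT : ∀ i, T (b i) = d i • b i) (i : ι) (x : E) :
    ⟪b i, T x⟫_𝕜 = d i * ⟪b i, x⟫_𝕜 := by
  have : (innerSL 𝕜 (b i)).comp T = d i • innerSL 𝕜 (b i) := by
    refine ContinuousLinearMap.ext_on
      (Submodule.dense_iff_topologicalClosure_eq_top.mpr b.dense_span) ?_
    rintro _ ⟨j, rfl⟩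
    obtain rfl | hij := eq_or_ne i j
    · simp [hT]
    · simp [hT, b.orthonormal.inner_eq_zero hij]
  simpa using congr($this x)

theorem HilbertBasis.opNorm_le_of_apply_eq_smul (b : HilbertBasis ι 𝕜 E) {T : E →L[𝕜] E}
    {d : ι → 𝕜} {M : ℝ} (hM : 0 ≤ M) (hT : ∀ i, T (b i) = d i • b i) (hd : ∀ i, ‖d i‖ ≤ M) :
    ‖T‖ ≤ M := by
  refine T.opNorm_le_bound hM fun x => ?_
  have hrepr : ∀ i, ‖b.repr (T x) i‖ ≤ ‖((M : 𝕜) • b.repr x) i‖ := fun i => by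
    rw [b.repr_apply_apply, b.inner_apply_of_apply_eq_smul hT, lp.coeFn_smul, Pi.smul_apply,
      b.repr_apply_apply, norm_mul, norm_smul, RCLike.norm_ofReal, abs_of_nonneg hM]
    exact mul_le_mul_of_nonneg_right (hd i) (norm_nonneg _)
  calc ‖T x‖ = ‖b.repr (T x)‖ := (b.repr.norm_map _).symm
    _ ≤ ‖(M : 𝕜) • b.repr x‖ := lp.norm_mono two_ne_zero hrepr
    _ = M * ‖x‖ := by rw [norm_smul, RCLike.norm_ofReal, abs_of_nonneg hM, b.repr.norm_map]

theorem orthonormal_inv_norm_smul_s8 {v : ι → E} (hv : ∀ i, v i ≠ 0)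
    (horth : Pairwise fun i j => ⟪v i, v j⟫_𝕜 = 0) :
    Orthonormal 𝕜 fun i => ((‖v i‖⁻¹ : ℝ) : 𝕜) • v i := by
  refine ⟨fun i => ?_, fun i j hij => ?_⟩
  · rw [norm_smul, RCLike.norm_ofReal, abs_inv, abs_norm,
      inv_mul_cancel₀ (norm_ne_zero_iff.mpr (hv i))]
  · simp [inner_smul_left, inner_smul_right, horth hij]

variable [CompleteSpace E]

theorem opNorm_le_of_apply_eq_smul_of_orthogonal {v : ι → E} (hv : ∀ i, v i ≠ 0)
    (horth : Pairwise fun i j => ⟪v i, v j⟫_𝕜 = 0)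
    (hdense : (span 𝕜 (Set.range v)).topologicalClosure = ⊤) {T : E →L[𝕜] E} {M : ℝ}
    (hM : 0 ≤ M) (hT : ∀ i, ∃ c : 𝕜, ‖c‖ ≤ M ∧ T (v i) = c • v i) : ‖T‖ ≤ M := by
  choose d hd hTd using hT
  set u := fun i => ((‖v i‖⁻¹ : ℝ) : 𝕜) • v i
  have hspan : ⊤ ≤ (span 𝕜 (Set.range u)).topologicalClosure := by
    rw [← hdense]
    refine topologicalClosure_mono (span_le.mpr ?_)
    rintro _ ⟨i, rfl⟩
    have : v i = ((‖v i‖ : ℝ) : 𝕜) • u i := by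
      rw [smul_smul, ← RCLike.ofReal_mul, mul_inv_cancel₀ (norm_ne_zero_iff.mpr (hv i)),
        RCLike.ofReal_one, one_smul]
    rw [this]
    exact smul_mem _ _ (subset_span ⟨i, rfl⟩)
  refine (HilbertBasis.mk (orthonormal_inv_norm_smul_s8 hv horth) hspan).opNorm_le_of_apply_eq_smul
    hM (fun i => ?_) hd
  simp [HilbertBasis.coe_mk, hTd, smul_comm _ (d i)]

theorem ContinuousLinearMap.eq_starProjection (K : Submodule 𝕜 E) [K.HasOrthogonalProjection]
    {Q : E →L[𝕜] E} (hmem : ∀ x, Q x ∈ K) (hfix : ∀ x ∈ K, Q x = x) (hsa : adjoint Q = Q) :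
    Q = K.starProjection := by
  ext x
  refine (eq_starProjection_of_mem_orthogonal (hmem x) ?_).symm
  intro u hu
  rw [inner_sub_right, ← adjoint_inner_left, hsa, hfix u hu, sub_self]

theorem inner_starProjection_comp_adjoint_comp_apply (K : Submodule 𝕜 E) [K.HasOrthogonalProjection]
    (A : E →L[𝕜] E) {x : E} (hx : x ∈ K) :
    ⟪x, (K.starProjection ∘L adjoint A ∘L K.starProjection ∘L A ∘L K.starProjection) x⟫_𝕜
      = ((‖K.starProjection (A x)‖ ^ 2 : ℝ) : 𝕜) := by
  have hPAx : K.starProjection (K.starProjection (A x)) = K.starProjection (A x) :=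
    starProjection_eq_self_iff.mpr (starProjection_apply_mem K (A x))
  simp only [comp_apply, starProjection_eq_self_iff.mpr hx]
  rw [← inner_starProjection_left_eq_right, starProjection_eq_self_iff.mpr hx, adjoint_inner_right]
  conv_lhs => rw [← hPAx, ← inner_starProjection_left_eq_right K]
  rw [inner_self_eq_norm_sq_to_K, RCLike.ofReal_pow]

theorem sum_mul_norm_starProjection_sq_le (K : Submodule 𝕜 E) [K.HasOrthogonalProjection]
    {ι : Type*} (t : Finset ι) (w : ι → ℝ) (A : ι → E →L[𝕜] E) {x : E} (hx : x ∈ K)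
    (hx1 : ‖x‖ = 1) :
    ∑ i ∈ t, w i * ‖K.starProjection (A i x)‖ ^ 2 ≤
      ‖∑ i ∈ t, (w i : 𝕜) •
        (K.starProjection ∘L adjoint (A i) ∘L K.starProjection ∘L A i ∘L K.starProjection)‖ := by
  set T := ∑ i ∈ t, (w i : 𝕜) •
    (K.starProjection ∘L adjoint (A i) ∘L K.starProjection ∘L A i ∘L K.starProjection)
  have hT : ⟪x, T x⟫_𝕜 = ((∑ i ∈ t, w i * ‖K.starProjection (A i x)‖ ^ 2 : ℝ) : 𝕜) := by
    simp only [T, sum_apply, smul_apply, inner_sum, inner_smul_right,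
      inner_starProjection_comp_adjoint_comp_apply K _ hx, RCLike.ofReal_sum, RCLike.ofReal_mul]
  calc ∑ i ∈ t, w i * ‖K.starProjection (A i x)‖ ^ 2 = RCLike.re ⟪x, T x⟫_𝕜 := by
        rw [hT, RCLike.ofReal_re]
    _ ≤ ‖⟪x, T x⟫_𝕜‖ := RCLike.re_le_norm _
    _ ≤ ‖x‖ * ‖T x‖ := norm_inner_le_norm _ _
    _ ≤ ‖T‖ := by
      rw [hx1, one_mul]
      simpa [hx1] using T.le_opNorm x

variable (𝕜) in
noncomputable abbrev closedSpanProjection (v : ι → E) (s : Set ι) : E →L[𝕜] E :=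
  (span 𝕜 (v '' s)).topologicalClosure.starProjection

theorem closedSpanProjection_apply_of_mem {v : ι → E} {s : Set ι} {i : ι} (hi : i ∈ s) :
    closedSpanProjection 𝕜 v s (v i) = v i :=
  starProjection_eq_self_iff.mpr (le_topologicalClosure _ (subset_span ⟨i, hi, rfl⟩))

theorem closedSpanProjection_apply_of_notMem {v : ι → E}
    (horth : Pairwise fun i j => ⟪v i, v j⟫_𝕜 = 0) {s : Set ι} {i : ι} (hi : i ∉ s) :
    closedSpanProjection 𝕜 v s (v i) = 0 := by
  rw [closedSpanProjection, starProjection_apply_eq_zero_iff, orthogonal_closure]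
  have : span 𝕜 (v '' s) ≤ (𝕜 ∙ v i)ᗮ := by
    rw [span_le]
    rintro _ ⟨j, hj, rfl⟩
    exact mem_orthogonal_singleton_iff_inner_right.mpr (horth (ne_of_mem_of_not_mem hj hi).symm)
  intro u hu
  exact inner_eq_zero_symm.mp (mem_orthogonal_singleton_iff_inner_right.mp (this hu))

end Hilbert

theorem Finsupp.coe_mul_eq_zero_of_notMem_support {Γ : Type*} (w : Γ →₀ ℝ≥0) (g : Γ → ℝ) :
    ∀ γ ∉ w.support, (w γ : ℝ) * g γ = 0 := fun γ hγ => by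
  simp [Finsupp.notMem_support_iff.mp hγ]

theorem tsum_comp_injective_eq_sum_filter {X Γ : Type*} {i : X → Γ} (hi : Function.Injective i)
    (t : Finset Γ) {f : Γ → ℝ} (hf : ∀ γ ∉ t, f γ = 0) [DecidablePred (· ∈ Set.range i)] :
    ∑' x, f (i x) = ∑ γ ∈ t with γ ∈ Set.range i, f γ := by
  calc ∑' x, f (i x) = ∑' x, (Set.range i).indicator f (i x) := by simp
    _ = ∑' γ, (Set.range i).indicator f γ := hi.tsum_eq Set.support_indicator_subset
    _ = ∑ γ ∈ t, (Set.range i).indicator f γ :=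
        tsum_eq_sum fun γ hγ => Set.indicator_apply_eq_zero.mpr fun _ => hf γ hγ
    _ = ∑ γ ∈ t with γ ∈ Set.range i, f γ := by
        simp only [Set.indicator_apply, Finset.sum_filter]

theorem tsum_subtype_eq_sum_filter {Γ : Type*} (t : Finset Γ) {f : Γ → ℝ}
    (hf : ∀ γ ∉ t, f γ = 0) (s : Set Γ) [DecidablePred (· ∈ s)] :
    ∑' γ : s, f γ = ∑ γ ∈ t with γ ∈ s, f γ := by
  classical
  rw [tsum_comp_injective_eq_sum_filter Subtype.val_injective t hf]
  simp only [Subtype.range_coe]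

section Monomial

variable {Γ : Type*}

theorem tsum_fiber_eq_sum_filter [Add Γ] [IsLeftCancelAdd Γ]
    (t : Finset Γ) {f : Γ → ℝ} (hf : ∀ γ ∉ t, f γ = 0) (α : Γ)
    [DecidablePred fun γ => ∃ β, γ + β = α] :
    ∑' p : {p : Γ × Γ // p.1 + p.2 = α}, f p.1.1 = ∑ γ ∈ t with ∃ β, γ + β = α, f γ := by
  classical
  have hinj : Function.Injective fun p : {p : Γ × Γ // p.1 + p.2 = α} => p.1.1 := by
    rintro ⟨⟨γ, β⟩, hp⟩ ⟨⟨γ', β'⟩, hq⟩ (rfl : γ = γ')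
    have : β = β' := add_left_cancel (hp.trans hq.symm)
    subst this; rfl
  rw [tsum_comp_injective_eq_sum_filter hinj t hf]
  refine Finset.sum_congr (Finset.filter_congr fun γ _ => ?_) fun _ _ => rfl
  exact ⟨fun ⟨p, hp⟩ => ⟨p.1.2, hp ▸ p.2⟩, fun ⟨β, hβ⟩ => ⟨⟨(γ, β), hβ⟩, rfl⟩⟩

theorem tsum_fiber_le_sum [Add Γ] [IsLeftCancelAdd Γ]
    (t : Finset Γ) {f : Γ → ℝ} (hf : ∀ γ ∉ t, f γ = 0) (hf0 : 0 ≤ f)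
    (α : Γ) : ∑' p : {p : Γ × Γ // p.1 + p.2 = α}, f p.1.1 ≤ ∑ γ ∈ t, f γ := by
  classical
  rw [tsum_fiber_eq_sum_filter t hf]
  exact Finset.sum_le_sum_of_subset_of_nonneg (Finset.filter_subset _ _) fun γ _ _ => hf0 γ

theorem iSup_tsum_fiber_le_tsum [Add Γ] [IsLeftCancelAdd Γ]
    {s : Set Γ} (hs : ∀ γ β, γ + β ∈ s → γ ∈ s) (t : Finset Γ)
    {f : Γ → ℝ} (hf : ∀ γ ∉ t, f γ = 0) (hf0 : 0 ≤ f) :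
    ⨆ α : s, ∑' p : {p : Γ × Γ // p.1 + p.2 = α.1}, f p.1.1 ≤ ∑' γ : s, f γ := by
  classical
  refine Real.iSup_le (fun α => ?_) (tsum_nonneg fun γ => hf0 γ)
  rw [tsum_fiber_eq_sum_filter t hf, tsum_subtype_eq_sum_filter t hf]
  refine Finset.sum_le_sum_of_subset_of_nonneg (fun γ hγ => ?_) fun γ _ _ => hf0 γ
  rw [Finset.mem_filter] at hγ ⊢
  obtain ⟨hγt, β, hβ⟩ := hγ
  exact ⟨hγt, hs γ β (hβ ▸ α.2)⟩

variable {H : Type*} [NormedAddCommGroup H] [InnerProductSpace ℂ H] [CompleteSpace H]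
  {z : Γ → H} {S : H →L[ℂ] H} {γ : Γ}

theorem adjoint_shift_apply_of_add_eq [Add Γ] [IsLeftCancelAdd Γ]
    (hz : ∀ α, z α ≠ 0)
    (horth : Pairwise fun α β => ⟪z α, z β⟫_ℂ = 0)
    (hdense : (span ℂ (Set.range z)).topologicalClosure = ⊤) (hS : ∀ β, S (z β) = z (γ + β))
    {α β : Γ} (h : γ + β = α) :
    adjoint S (z α) = ((‖z α‖ ^ 2 / ‖z β‖ ^ 2 : ℝ) : ℂ) • z β := by
  refine ext_inner_right_of_dense_span hdense fun δ => ?_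
  rw [adjoint_inner_left, hS, inner_smul_left, Complex.conj_ofReal]
  obtain rfl | hδ := eq_or_ne δ β
  · have : ‖z δ‖ ≠ 0 := norm_ne_zero_iff.mpr (hz δ)
    rw [h]
    simp [this]
  · have hne : α ≠ γ + δ := fun h' => hδ (add_left_cancel (h'.symm.trans h.symm))
    rw [horth hne, horth hδ.symm, mul_zero]

theorem adjoint_shift_apply_of_forall_add_ne [Add Γ]
    (horth : Pairwise fun α β => ⟪z α, z β⟫_ℂ = 0)
    (hdense : (span ℂ (Set.range z)).topologicalClosure = ⊤) (hS : ∀ β, S (z β) = z (γ + β))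
    {α : Γ} (h : ∀ β, γ + β ≠ α) : adjoint S (z α) = 0 :=
  ext_inner_right_of_dense_span hdense fun δ => by
    rw [adjoint_inner_left, hS, inner_zero_left, horth (h δ).symm]

open Classical in
theorem exists_shift_comp_starProjection_comp_adjoint_apply [Add Γ] [IsLeftCancelAdd Γ]
    (hz : ∀ α, z α ≠ 0)
    (horth : Pairwise fun α β => ⟪z α, z β⟫_ℂ = 0)
    (hdense : (span ℂ (Set.range z)).topologicalClosure = ⊤)
    (hcomm : ∀ α β, ‖z (α + β)‖ ≤ ‖z α‖ * ‖z β‖) (s : Set Γ) (hS : ∀ β, S (z β) = z (γ + β))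
    (α : Γ) :
    ∃ c : ℝ, 0 ≤ c ∧ (c ≤ if ∃ β, γ + β = α then ‖z γ‖ ^ 2 else 0) ∧
      (S ∘L closedSpanProjection ℂ z s ∘L adjoint S) (z α)
        = (c : ℂ) • z α := by
  by_cases h : ∃ β, γ + β = α
  · obtain ⟨β, rfl⟩ := h
    rw [if_pos ⟨β, rfl⟩]
    have hadj := adjoint_shift_apply_of_add_eq hz horth hdense hS (β := β) rfl
    by_cases hβ : β ∈ s
    · refine ⟨‖z (γ + β)‖ ^ 2 / ‖z β‖ ^ 2, by positivity, ?_, ?_⟩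
      · rw [div_le_iff₀ (pow_pos (norm_pos_iff.mpr (hz β)) 2), ← mul_pow]
        exact pow_le_pow_left₀ (norm_nonneg _) (hcomm γ β) 2
      · simp [hadj, closedSpanProjection_apply_of_mem hβ, hS]
    · exact ⟨0, le_rfl, by positivity,
        by simp [hadj, closedSpanProjection_apply_of_notMem horth hβ]⟩
  · exact ⟨0, le_rfl, by rw [if_neg h],
      by simp [adjoint_shift_apply_of_forall_add_ne horth hdense hS (not_exists.mp h)]⟩

theorem exists_truncatedRow_apply [Add Γ] [IsLeftCancelAdd Γ]
    (hz : ∀ α, z α ≠ 0)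
    (horth : Pairwise fun α β => ⟪z α, z β⟫_ℂ = 0)
    (hdense : (span ℂ (Set.range z)).topologicalClosure = ⊤)
    (hcomm : ∀ α β, ‖z (α + β)‖ ≤ ‖z α‖ * ‖z β‖) {s : Set Γ} (w : Γ →₀ ℝ≥0)
    {S : Γ → H →L[ℂ] H} (hS : ∀ γ β, S γ (z β) = z (γ + β)) {α : Γ} (hα : α ∈ s) :
    ∃ d : ℝ, 0 ≤ d ∧ d ≤ ∑' p : {p : Γ × Γ // p.1 + p.2 = α}, (w p.1.1 : ℝ) * ‖z p.1.1‖ ^ 2 ∧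
      (∑ γ ∈ w.support, ((w γ : ℝ) : ℂ) •
        (closedSpanProjection ℂ z s ∘L S γ ∘L
          closedSpanProjection ℂ z s ∘L adjoint (S γ) ∘L
          closedSpanProjection ℂ z s)) (z α) = (d : ℂ) • z α := by
  classical
  choose c hc0 hc hSc using fun γ =>
    exists_shift_comp_starProjection_comp_adjoint_apply hz horth hdense hcomm s (hS γ) α
  refine ⟨∑ γ ∈ w.support, w γ * c γ,
    Finset.sum_nonneg fun γ _ => mul_nonneg (w γ).2 (hc0 γ), ?_, ?_⟩
  · rw [tsum_fiber_eq_sum_filter w.support (f := fun γ => (w γ : ℝ) * ‖z γ‖ ^ 2)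
      (w.coe_mul_eq_zero_of_notMem_support _), Finset.sum_filter]
    refine Finset.sum_le_sum fun γ _ => ?_
    rw [← mul_ite_zero]
    exact mul_le_mul_of_nonneg_left (hc γ) (w γ).2
  · have hSc' : ∀ γ, S γ (closedSpanProjection ℂ z s (adjoint (S γ) (z α))) = (c γ : ℂ) • z α :=
      hSc
    simp only [sum_apply, smul_apply, comp_apply, closedSpanProjection_apply_of_mem hα, hSc',
      map_smul, smul_smul, Finset.sum_smul, Complex.ofReal_sum, Complex.ofReal_mul]

theorem norm_truncatedRow_le_iSup [Add Γ] [IsLeftCancelAdd Γ]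
    (hz : ∀ α, z α ≠ 0)
    (horth : Pairwise fun α β => ⟪z α, z β⟫_ℂ = 0)
    (hdense : (span ℂ (Set.range z)).topologicalClosure = ⊤)
    (hcomm : ∀ α β, ‖z (α + β)‖ ≤ ‖z α‖ * ‖z β‖) (s : Set Γ) (w : Γ →₀ ℝ≥0)
    {S : Γ → H →L[ℂ] H} (hS : ∀ γ β, S γ (z β) = z (γ + β)) :
    ‖∑ γ ∈ w.support, ((w γ : ℝ) : ℂ) •
        (closedSpanProjection ℂ z s ∘L S γ ∘L
          closedSpanProjection ℂ z s ∘L adjoint (S γ) ∘L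
          closedSpanProjection ℂ z s)‖
      ≤ ⨆ α : s, ∑' p : {p : Γ × Γ // p.1 + p.2 = α.1}, (w p.1.1 : ℝ) * ‖z p.1.1‖ ^ 2 := by
  have hbdd : BddAbove (Set.range fun α : s =>
      ∑' p : {p : Γ × Γ // p.1 + p.2 = α.1}, (w p.1.1 : ℝ) * ‖z p.1.1‖ ^ 2) := by
    refine ⟨∑ γ ∈ w.support, (w γ : ℝ) * ‖z γ‖ ^ 2, ?_⟩
    rintro _ ⟨α, rfl⟩
    exact tsum_fiber_le_sum w.support (w.coe_mul_eq_zero_of_notMem_support fun γ => ‖z γ‖ ^ 2)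
      (fun γ => by positivity) α
  have hM : 0 ≤ ⨆ α : s, ∑' p : {p : Γ × Γ // p.1 + p.2 = α.1}, (w p.1.1 : ℝ) * ‖z p.1.1‖ ^ 2 :=
    Real.iSup_nonneg fun α => tsum_nonneg fun p => by positivity
  refine opNorm_le_of_apply_eq_smul_of_orthogonal hz horth hdense hM fun α => ?_
  by_cases hα : α ∈ s
  · obtain ⟨d, hd0, hd, hTd⟩ := exists_truncatedRow_apply hz horth hdense hcomm w hS hα
    refine ⟨d, ?_, hTd⟩
    rw [Complex.norm_real, Real.norm_of_nonneg hd0]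
    exact hd.trans (le_ciSup hbdd ⟨α, hα⟩)
  · exact ⟨0, by simpa using hM, by simp [closedSpanProjection_apply_of_notMem horth hα]⟩

theorem tsum_le_norm_truncatedColumn [AddZeroClass Γ]
    (horth : Pairwise fun α β => ⟪z α, z β⟫_ℂ = 0)
    {s : Set Γ} (hs : (0 : Γ) ∈ s) (hz0 : ‖z 0‖ = 1) (w : Γ →₀ ℝ≥0)
    {S : Γ → H →L[ℂ] H} (hS : ∀ γ β, S γ (z β) = z (γ + β)) :
    ∑' γ : s, (w γ : ℝ) * ‖z γ‖ ^ 2 ≤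
      ‖∑ γ ∈ w.support, ((w γ : ℝ) : ℂ) •
        (closedSpanProjection ℂ z s ∘L adjoint (S γ) ∘L
          closedSpanProjection ℂ z s ∘L S γ ∘L
          closedSpanProjection ℂ z s)‖ := by
  classical
  refine le_of_eq_of_le ?_ (sum_mul_norm_starProjection_sq_le _ w.support (fun γ => (w γ : ℝ)) S
    (le_topologicalClosure _ (subset_span ⟨0, hs, rfl⟩)) hz0)
  rw [tsum_subtype_eq_sum_filter w.support (f := fun γ => (w γ : ℝ) * ‖z γ‖ ^ 2)
    (w.coe_mul_eq_zero_of_notMem_support _), Finset.sum_filter]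
  refine Finset.sum_congr rfl fun γ _ => ?_
  rw [hS, add_zero]
  by_cases hγ : γ ∈ s
  · simp [closedSpanProjection_apply_of_mem hγ, hγ]
  · simp [closedSpanProjection_apply_of_notMem horth hγ, hγ]

end Monomial

/-- Truncated shifts: with `Γ = ι →₀ ℕ`, `Q` the orthogonal projection onto the
closed span of the monomials of degree at most `n`, and `w` finitely supported, the truncated
row norm is bounded by `max_{|α| ≤ n} ∑_{γ+β=α} w γ ‖z γ‖²`, which is bounded by
`∑_{|γ| ≤ n} w γ ‖z γ‖²`, which is bounded by the truncated column norm. -/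
theorem stmt_8
    {H : Type*} [NormedAddCommGroup H] [InnerProductSpace ℂ H] [CompleteSpace H]
    {ι : Type*}
    (z : (ι →₀ ℕ) → H)
    (hz_ne : ∀ α, z α ≠ 0)
    (hz_orth : ∀ α β, α ≠ β → (inner ℂ (z α) (z β) : ℂ) = 0)
    (hz_dense : (Submodule.span ℂ (Set.range z)).topologicalClosure = ⊤)
    (hz0 : ‖z 0‖ = 1)
    (hcomm : ∀ α β, ‖z (α + β)‖ ≤ ‖z α‖ * ‖z β‖)
    (n : ℕ)
    (Q : H →L[ℂ] H)
    (hQ_mem : ∀ x : H, Q x ∈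
      (Submodule.span ℂ (z '' {α | (α.sum fun _ k => k) ≤ n})).topologicalClosure)
    (hQ_fix : ∀ x ∈
      (Submodule.span ℂ (z '' {α | (α.sum fun _ k => k) ≤ n})).topologicalClosure, Q x = x)
    (hQ_sa : ContinuousLinearMap.adjoint Q = Q)
    (w : (ι →₀ ℕ) →₀ ℝ≥0)
    (S : (ι →₀ ℕ) → H →L[ℂ] H) (hS : ∀ γ β, S γ (z β) = z (γ + β)) :
    ‖∑ γ ∈ w.support, ((w γ : ℝ) : ℂ) •
        (Q ∘L S γ ∘L Q ∘L ContinuousLinearMap.adjoint (S γ) ∘L Q)‖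
      ≤ (⨆ α : {α : ι →₀ ℕ // (α.sum fun _ k => k) ≤ n},
          ∑' p : {p : (ι →₀ ℕ) × (ι →₀ ℕ) // p.1 + p.2 = α.1},
            (w p.1.1 : ℝ) * ‖z p.1.1‖ ^ 2) ∧
    (⨆ α : {α : ι →₀ ℕ // (α.sum fun _ k => k) ≤ n},
        ∑' p : {p : (ι →₀ ℕ) × (ι →₀ ℕ) // p.1 + p.2 = α.1},
          (w p.1.1 : ℝ) * ‖z p.1.1‖ ^ 2)
      ≤ (∑' γ : {γ : ι →₀ ℕ // (γ.sum fun _ k => k) ≤ n}, (w γ.1 : ℝ) * ‖z γ.1‖ ^ 2) ∧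
    (∑' γ : {γ : ι →₀ ℕ // (γ.sum fun _ k => k) ≤ n}, (w γ.1 : ℝ) * ‖z γ.1‖ ^ 2)
      ≤ ‖∑ γ ∈ w.support, ((w γ : ℝ) : ℂ) •
          (Q ∘L ContinuousLinearMap.adjoint (S γ) ∘L Q ∘L S γ ∘L Q)‖ := by
  have hQ : Q = closedSpanProjection ℂ z {α | (α.sum fun _ k => k) ≤ n} :=
    eq_starProjection _ hQ_mem hQ_fix hQ_sa
  subst hQ
  have horth : Pairwise fun α β => ⟪z α, z β⟫_ℂ = 0 := fun α β h => hz_orth α β h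
  have hdeg : ∀ γ β : ι →₀ ℕ, ((γ + β).sum fun _ k => k) ≤ n → (γ.sum fun _ k => k) ≤ n := by
    intro γ β h
    change (γ + β).degree ≤ n at h
    change γ.degree ≤ n
    rw [map_add] at h
    omega
  refine ⟨norm_truncatedRow_le_iSup hz_ne horth hz_dense hcomm _ w hS,
    iSup_tsum_fiber_le_tsum hdeg w.support (f := fun γ => (w γ : ℝ) * ‖z γ‖ ^ 2)
      (w.coe_mul_eq_zero_of_notMem_support _) (fun γ => by positivity),
    tsum_le_norm_truncatedColumn horth (s := {α | (α.sum fun _ k => k) ≤ n}) (by simp) hz0 w hS⟩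
end

section
/- Let μ be a nondegenerate Borel probability measure on H. Then there exists a countable set A ⊆ H whose closed linear span is all of H and such that every a ∈ A lies in the support of μ, i.e. μ U > 0 for every open set U containing a. -/
open MeasureTheory

/-!
Since `H` is second countable, `μ` is carried by its support `S`: the complement of `S` is a
countable union of open null sets. A vector `g` orthogonal to `S` is then orthogonal to `μ`-almost
every point, so nondegeneracy forces `g = 0` and `span S` is dense. Any countable dense subset of
the separable set `S` has the same closed span.
-/

theorem Submodule.topologicalClosure_span_le_of_subset_closure {R M : Type*} [Semiring R]
    [AddCommMonoid M] [Module R M] [TopologicalSpace M] [ContinuousAdd M]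
    [ContinuousConstSMul R M] {s t : Set M} (hst : s ⊆ closure t) :
    (span R s).topologicalClosure ≤ (span R t).topologicalClosure :=
  topologicalClosure_minimal _
    (span_le.2 (hst.trans (closure_subset_topologicalClosure_span t)))
    (isClosed_topologicalClosure _)

theorem topologicalClosure_span_eq_top_of_ae_mem {𝕜 E : Type*} [RCLike 𝕜] [NormedAddCommGroup E]
    [InnerProductSpace 𝕜 E] [CompleteSpace E] [MeasurableSpace E] {μ : Measure E} {S : Set E}
    (hμ : ∀ g : E, g ≠ 0 → ¬ ∀ᵐ x ∂μ, inner 𝕜 g x = 0) (hS : ∀ᵐ x ∂μ, x ∈ S) :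
    (Submodule.span 𝕜 S).topologicalClosure = ⊤ := by
  rw [Submodule.topologicalClosure_eq_top_iff, Submodule.eq_bot_iff]
  intro g hg
  by_contra hg0
  refine hμ g hg0 (hS.mono fun x hx => ?_)
  exact inner_eq_zero_symm.1 (hg x (Submodule.subset_span hx))

theorem stmt_9_general
    {H : Type*} [NormedAddCommGroup H] [InnerProductSpace ℂ H] [CompleteSpace H]
    [TopologicalSpace.SeparableSpace H]
    [MeasurableSpace H]
    (μ : Measure H) [IsProbabilityMeasure μ]
    (hμ : ∀ g : H, g ≠ 0 → μ {x : H | (inner ℂ g x : ℂ) = 0} < 1) :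
    ∃ A : Set H, A.Countable ∧ (Submodule.span ℂ A).topologicalClosure = ⊤ ∧
      ∀ a ∈ A, ∀ U : Set H, IsOpen U → a ∈ U → 0 < μ U := by
  have hspan : (Submodule.span ℂ μ.support).topologicalClosure = ⊤ := by
    refine topologicalClosure_span_eq_top_of_ae_mem (fun g hg hae => ?_) Measure.support_mem_ae
    refine (hμ g hg).ne ?_
    rw [measure_congr (ae_eq_univ.2 hae), measure_univ]
  obtain ⟨A, hAS, hAc, hSA⟩ :=
    (TopologicalSpace.IsSeparable.of_separableSpace μ.support).exists_countable_dense_subset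
  refine ⟨A, hAc, top_le_iff.1 ?_, fun a ha U hU haU => ?_⟩
  · exact hspan ▸ Submodule.topologicalClosure_span_le_of_subset_closure hSA
  · exact (Measure.mem_support_iff_forall a).1 (hAS ha) U (hU.mem_nhds haU)

/-- If `μ` is a nondegenerate Borel probability measure on a separable complex
Hilbert space `H`, there is a countable set `A ⊆ H` whose closed linear span is `H` and all of
whose points lie in the support of `μ`. -/
theorem stmt_9
    {H : Type*} [NormedAddCommGroup H] [InnerProductSpace ℂ H] [CompleteSpace H]
    [TopologicalSpace.SeparableSpace H]
    [MeasurableSpace H] [BorelSpace H]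
    (μ : Measure H) [IsProbabilityMeasure μ]
    (hμ : ∀ g : H, g ≠ 0 → μ {x : H | (inner ℂ g x : ℂ) = 0} < 1) :
    ∃ A : Set H, A.Countable ∧ (Submodule.span ℂ A).topologicalClosure = ⊤ ∧
      ∀ a ∈ A, ∀ U : Set H, IsOpen U → a ∈ U → 0 < μ U :=
  stmt_9_general μ hμ
end

section
/- (Random basis lemma.) Let (Ω, P) be a probability space and X : ℕ → Ω → H an i.i.d. sequence of Borel-measurable random variables each with nondegenerate distribution μ. Then for P-almost every ω ∈ Ω, the closed linear span of {X n ω : n ∈ ℕ} equals H. -/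
/-!
By independence and the second Borel–Cantelli lemma, almost surely the samples `X n ω` visit every
basic open set of positive `μ`-measure, hence are dense in the support of `μ`, which is `μ`-conull.
So the closed span of the samples is a closed subspace of full measure; a nonzero vector orthogonal
to it would make the hyperplane it defines have full measure, contradicting nondegeneracy.
-/

open MeasureTheory ProbabilityTheory Filter TopologicalSpace Set

section IID

variable {Ω E : Type*} [MeasurableSpace Ω] [MeasurableSpace E] {P : Measure Ω} {μ : Measure E}
  {X : ℕ → Ω → E}

theorem ae_frequently_mem_of_iIndepFun (hX : ∀ n, Measurable (X n))
    (hdist : ∀ n, P.map (X n) = μ) (hindep : iIndepFun X P) {s : Set E} (hs : MeasurableSet s)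
    (hμs : μ s ≠ 0) : ∀ᵐ ω ∂P, ∃ᶠ n in atTop, X n ω ∈ s := by
  have := hindep.isProbabilityMeasure
  have hsets : iIndepSet (fun n => X n ⁻¹' s) P :=
    iIndep_comap_mem_iff.mp (hindep.comp (fun _ x => x ∈ s) fun _ => measurableSet_setOfPred.mp hs)
  have hsum : ∑' n, P (X n ⁻¹' s) = ⊤ := by
    simp_rw [← Measure.map_apply (hX _) hs, hdist]
    exact ENNReal.tsum_const_eq_top_of_ne_zero hμs
  have hlimsup := measure_limsup_eq_one (fun n => hX n hs) hsets hsum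
  rw [← mem_ae_iff_prob_eq_one (.measurableSet_limsup fun n => hX n hs)] at hlimsup
  filter_upwards [hlimsup] with ω hω
  simpa [mem_limsup_iff_frequently_mem] using hω

variable [TopologicalSpace E] [SecondCountableTopology E] [OpensMeasurableSpace E]

theorem ae_support_subset_closure_range_of_iIndepFun (hX : ∀ n, Measurable (X n))
    (hdist : ∀ n, P.map (X n) = μ) (hindep : iIndepFun X P) :
    ∀ᵐ ω ∂P, μ.support ⊆ closure (range fun n => X n ω) := by
  have hb := isBasis_countableBasis E
  have hhit : ∀ᵐ ω ∂P, ∀ s ∈ countableBasis E, μ s ≠ 0 → ∃ n, X n ω ∈ s := by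
    rw [ae_ball_iff (countable_countableBasis E)]
    intro s hs
    by_cases hμs : μ s = 0
    · exact .of_forall fun _ h => absurd hμs h
    · filter_upwards [ae_frequently_mem_of_iIndepFun hX hdist hindep
        (hb.isOpen hs).measurableSet hμs] with ω hω _ using hω.exists
  filter_upwards [hhit] with ω hω x hx
  rw [hb.mem_closure_iff]
  intro s hs hxs
  obtain ⟨n, hn⟩ :=
    hω s hs ((μ.mem_support_iff_forall x).1 hx s ((hb.isOpen hs).mem_nhds hxs)).ne'
  exact ⟨X n ω, hn, n, rfl⟩

end IID

section Nondegenerate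

variable {H : Type*} [NormedAddCommGroup H] [MeasurableSpace H]

def IsNondegenerate (𝕜 : Type*) [RCLike 𝕜] [InnerProductSpace 𝕜 H] (μ : Measure H) : Prop :=
  ∀ g : H, g ≠ 0 → μ {x | inner 𝕜 g x = 0} < 1

theorem IsNondegenerate.eq_top_of_mem_ae {𝕜 : Type*} [RCLike 𝕜] [InnerProductSpace 𝕜 H]
    [CompleteSpace H] [OpensMeasurableSpace H] {μ : Measure H} [IsProbabilityMeasure μ]
    (hμ : IsNondegenerate 𝕜 μ) {K : Submodule 𝕜 H}
    (hK : IsClosed (K : Set H)) (hae : (K : Set H) ∈ ae μ) : K = ⊤ := by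
  have : CompleteSpace K := hK.completeSpace_coe
  rw [← Submodule.orthogonal_eq_bot_iff, Submodule.eq_bot_iff]
  by_contra! ⟨g, hg, hg0⟩
  have hker : {x | inner 𝕜 g x = 0} ∈ ae μ :=
    mem_of_superset hae fun x hx => Submodule.inner_left_of_mem_orthogonal hx hg
  rw [mem_ae_iff_prob_eq_one (isClosed_eq (by fun_prop) continuous_const).measurableSet] at hker
  exact (hμ g hg0).ne hker

end Nondegenerate

/-- Random basis lemma: if `X n` is an i.i.d. sequence of random vectors in a
separable complex Hilbert space with nondegenerate common distribution `μ`, then almost surely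
the closed linear span of `{X n ω : n ∈ ℕ}` is all of `H`. -/
theorem stmt_10
    {H : Type*} [NormedAddCommGroup H] [InnerProductSpace ℂ H] [CompleteSpace H]
    [TopologicalSpace.SeparableSpace H]
    [MeasurableSpace H] [BorelSpace H]
    {Ω : Type*} [MeasurableSpace Ω]
    (P : Measure Ω) [IsProbabilityMeasure P]
    (X : ℕ → Ω → H)
    (hmeas : ∀ n, Measurable (X n))
    (μ : Measure H)
    (hdist : ∀ n, Measure.map (X n) P = μ)
    (hindep : ProbabilityTheory.iIndepFun X P)
    (hμ : ∀ g : H, g ≠ 0 → μ {x : H | (inner ℂ g x : ℂ) = 0} < 1) :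
    ∀ᵐ ω ∂P,
      (Submodule.span ℂ (Set.range fun n => X n ω)).topologicalClosure = ⊤ := by
  have : IsProbabilityMeasure μ :=
    hdist 0 ▸ Measure.isProbabilityMeasure_map (hmeas 0).aemeasurable
  filter_upwards [ae_support_subset_closure_range_of_iIndepFun hmeas hdist hindep] with ω hω
  refine IsNondegenerate.eq_top_of_mem_ae (𝕜 := ℂ) hμ (Submodule.isClosed_topologicalClosure _)
    (mem_of_superset Measure.support_mem_ae (hω.trans ?_))
  exact closure_minimal (Submodule.subset_span.trans (Submodule.le_topologicalClosure _))
    (Submodule.isClosed_topologicalClosure _)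
end

section
/- (The Drury–Arveson space is a committee space.) For every finite set s of a type ι and all functions f, g : ι → ℕ, the multinomial coefficients satisfy Nat.multinomial s f * Nat.multinomial s g ≤ Nat.multinomial s (f + g); equivalently, there are fewer ways to divide people into committees when constraints are placed on the composition of those committees. -/
/-!
Removing one index `a` from `s` factors each multinomial coefficient as a binomial coefficient
times the multinomial coefficient over the rest, so by induction on `s` it suffices that
`m.choose i * n.choose j ≤ (m + n).choose (i + j)`: the left side is one term of Vandermonde's
identity for the right side.
-/

theorem Nat.choose_mul_choose_le_choose_add (m n i j : ℕ) :
    m.choose i * n.choose j ≤ (m + n).choose (i + j) := by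
  rw [Nat.add_choose_eq]
  exact Finset.single_le_sum (f := fun p : ℕ × ℕ => m.choose p.1 * n.choose p.2)
    (fun _ _ => Nat.zero_le _) (a := (i, j))
    (Finset.HasAntidiagonal.mem_antidiagonal.mpr rfl)

/-- the multinomial committee inequality underlying the Drury–Arveson space:
`multinomial s f * multinomial s g ≤ multinomial s (f + g)`. -/
theorem stmt_15 {ι : Type*} (s : Finset ι) (f g : ι → ℕ) :
    Nat.multinomial s f * Nat.multinomial s g ≤ Nat.multinomial s (f + g) := by
  induction s using Finset.cons_induction with
  | empty => simp
  | cons a s ha ih =>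
    have hsum : (f + g) a + ∑ i ∈ s, (f + g) i =
        (f a + ∑ i ∈ s, f i) + (g a + ∑ i ∈ s, g i) := by
      simp only [Pi.add_apply, Finset.sum_add_distrib]; ring
    rw [Nat.multinomial_cons, Nat.multinomial_cons, Nat.multinomial_cons, hsum]
    calc (f a + ∑ i ∈ s, f i).choose (f a) * Nat.multinomial s f *
          ((g a + ∑ i ∈ s, g i).choose (g a) * Nat.multinomial s g)
        = (f a + ∑ i ∈ s, f i).choose (f a) * (g a + ∑ i ∈ s, g i).choose (g a) *
          (Nat.multinomial s f * Nat.multinomial s g) := by ring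
      _ ≤ ((f a + ∑ i ∈ s, f i) + (g a + ∑ i ∈ s, g i)).choose (f a + g a) *
          Nat.multinomial s (f + g) :=
        Nat.mul_le_mul (Nat.choose_mul_choose_le_choose_add _ _ _ _) ih
end
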